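/- arXiv:math/0410351 — 5 statements merged into one kernel-verified Lean document; each statement's English description precedes it below -/
import Mathlib

section
/- Let φ : 𝔻 → 𝔻 be a non-constant analytic function belonging to A⁺(𝕋) such that the composition operator C_φ (f ↦ f∘φ) maps A⁺(𝕋) into itself (equivalently, sup_{n≥1} ‖φⁿ‖_{A⁺(𝕋)} < ∞). Then C_φ : A⁺(𝕋) → A⁺(𝕋) is a compact operator if and only if sup_{z∈𝔻} |φ(z)| < 1; equivalently, if and only if ‖φⁿ‖_{A⁺(𝕋)} → 0 as n → ∞. -/
/-!
Write `δₙ` for the coefficient sequence of `zⁿ`, so that `T δₙ` is the coefficient sequence of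
`φⁿ`. Evaluating at `z` gives `|φ z|ⁿ ≤ ‖T δₙ‖`, so `‖T δₙ‖ → 0` forces `sup |φ| < 1`.
If `T` is compact, every cluster point of `(T δₙ)` has a Taylor series vanishing on `𝔻`,
because `φ(z)ⁿ → 0` there, hence `T δₙ → 0`; conversely, if `T δₙ → 0` then `T` is the
operator-norm limit of its finite-rank truncations.

For `sup |φ| ≤ r < 1 ⇒ ‖T δₙ‖ → 0` write `φ = ∑ pₖ zᵏ` and `S` for the shift; multiplication by
`φ` is `Φ = ∑ pₖ Sᵏ` and `T δₙ = Φⁿ δ₀`. A character `χ` of the closed commutative algebra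
generated by `S` has `|χ S| ≤ 1`, so `χ Φ = ∑ pₖ (χ S)ᵏ` is a value of the Taylor series of `φ`
on the closed disc, of modulus `≤ r`. The spectral radius of `Φ` is thus `≤ r < 1`, and
Gelfand's formula gives `‖Φⁿ‖ → 0`.
-/

open Complex Filter Metric
open scoped ENNReal

noncomputable section

/-- The Banach space `ℓ¹(ℕ₀)` of Taylor coefficient sequences, modelling the Wiener
algebra `A⁺(𝕋)` of absolutely convergent Taylor series (the sequence `a` corresponds to
the function `z ↦ ∑ a n zⁿ`, and the `A⁺`-norm is the `ℓ¹`-norm). -/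
abbrev l1N := lp (fun _ : ℕ => ℂ) 1

open Topology

theorem tendsto_of_isCompact_of_forall_tendsto_comp {X Y ι : Type*} [TopologicalSpace X]
    [TopologicalSpace Y] [T2Space Y] {K : Set X} (hK : IsCompact K) {u : ℕ → X}
    (huK : ∀ n, u n ∈ K) {f : ι → X → Y} (hf : ∀ i, Continuous (f i))
    (hsep : ∀ x y, (∀ i, f i x = f i y) → x = y) {x : X}
    (hux : ∀ i, Tendsto (f i ∘ u) atTop (𝓝 (f i x))) : Tendsto u atTop (𝓝 x) := by
  refine hK.tendsto_nhds_of_unique_mapClusterPt (.of_forall huK) fun y _ hy => hsep y x fun i => ?_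
  exact eq_of_nhds_neBot (ClusterPt.mono (hy.tendsto_comp (hf i).continuousAt) (hux i)).neBot

theorem norm_mul_pow_le {c z : ℂ} (hz : ‖z‖ ≤ 1) (k : ℕ) : ‖c * z ^ k‖ ≤ ‖c‖ := by
  rw [norm_mul, norm_pow]
  exact mul_le_of_le_one_right (norm_nonneg _) (pow_le_one₀ (norm_nonneg _) hz)

theorem summable_mul_pow {p : ℕ → ℂ} (hp : Summable (‖p ·‖)) {z : ℂ} (hz : ‖z‖ ≤ 1) :
    Summable fun k => p k * z ^ k :=
  .of_norm_bounded hp fun k => norm_mul_pow_le hz k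

theorem norm_tsum_mul_pow_le_of_forall_norm_lt_one {p : ℕ → ℂ} (hp : Summable (‖p ·‖)) {r : ℝ}
    (hr : ∀ z : ℂ, ‖z‖ < 1 → ‖∑' k, p k * z ^ k‖ ≤ r) {w : ℂ} (hw : ‖w‖ ≤ 1) :
    ‖∑' k, p k * w ^ k‖ ≤ r := by
  have hcont : ContinuousOn (fun z : ℂ => ∑' k, p k * z ^ k) (closure (ball 0 1)) := by
    rw [closure_ball (0 : ℂ) one_ne_zero]
    exact continuousOn_tsum (fun k => by fun_prop) hp fun k z hz =>
      norm_mul_pow_le (mem_closedBall_zero_iff.mp hz) k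
  refine le_on_closure (fun z hz => hr z (mem_ball_zero_iff.mp hz)) hcont.norm continuousOn_const ?_
  rwa [closure_ball (0 : ℂ) one_ne_zero, mem_closedBall_zero_iff]

section BanachAlgebra

variable {A : Type*} [NormedRing A] [NormedAlgebra ℂ A] [CompleteSpace A]

theorem tendsto_norm_pow_of_spectralRadius_lt_one {a : A} (ha : spectralRadius ℂ a < 1) :
    Tendsto (fun n => ‖a ^ n‖) atTop (𝓝 0) := by
  obtain ⟨s, hρs, hs1⟩ := ENNReal.lt_iff_exists_nnreal_btwn.mp ha
  have hroot : ∀ᶠ n : ℕ in atTop, ENNReal.ofReal (‖a ^ n‖ ^ (n : ℝ)⁻¹) < s := by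
    simpa only [one_div] using
      (spectrum.pow_norm_pow_one_div_tendsto_nhds_spectralRadius a).eventually_lt_const hρs
  have hle : ∀ᶠ n : ℕ in atTop, ‖a ^ n‖ ≤ (s : ℝ) ^ n := by
    filter_upwards [hroot, eventually_gt_atTop 0] with n hn hn0
    rw [ENNReal.ofReal_lt_iff_lt_toReal (by positivity) ENNReal.coe_ne_top,
      ENNReal.coe_toReal] at hn
    simpa using ((Real.rpow_inv_lt_iff_of_pos (norm_nonneg _) s.2 (Nat.cast_pos.mpr hn0)).mp hn).le
  exact squeeze_zero' (.of_forall fun n => norm_nonneg _) hle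
    (tendsto_pow_atTop_nhds_zero_of_lt_one s.2 (by exact_mod_cast hs1))

variable [NormOneClass A]

theorem summable_smul_pow {s : A} (hs : ‖s‖ ≤ 1) {p : ℕ → ℂ} (hp : Summable (‖p ·‖)) :
    Summable fun k => p k • s ^ k :=
  .of_norm_bounded hp fun k => (norm_smul_le _ _).trans <| mul_le_of_le_one_right (norm_nonneg _)
    ((norm_pow_le s k).trans (pow_le_one₀ (norm_nonneg _) hs))

theorem spectralRadius_tsum_smul_pow_le {B : Type*} [NormedCommRing B] [NormedAlgebra ℂ B]
    [CompleteSpace B] [NormOneClass B] {s : B} (hs : ‖s‖ ≤ 1) {p : ℕ → ℂ}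
    (hp : Summable (‖p ·‖)) {r : ℝ} (hr : ∀ w : ℂ, ‖w‖ ≤ 1 → ‖∑' k, p k * w ^ k‖ ≤ r) :
    spectralRadius ℂ (∑' k, p k • s ^ k) ≤ ENNReal.ofReal r := by
  refine iSup₂_le fun z hz => ?_
  obtain ⟨χ, rfl⟩ := WeakDual.CharacterSpace.mem_spectrum_iff_exists.mp hz
  have hχs : ‖χ s‖ ≤ 1 :=
    (spectrum.norm_le_norm_of_mem (WeakDual.CharacterSpace.apply_mem_spectrum χ s)).trans hs
  have hχ : χ (∑' k, p k • s ^ k) = ∑' k, p k * χ s ^ k := by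
    simpa using (WeakDual.CharacterSpace.toCLM χ).map_tsum (summable_smul_pow hs hp)
  rw [hχ, ← ENNReal.ofReal_coe_nnreal, coe_nnnorm]
  exact ENNReal.ofReal_le_ofReal (hr _ hχs)

theorem tendsto_norm_pow_tsum_smul_pow {s : A} (hs : ‖s‖ ≤ 1) {p : ℕ → ℂ}
    (hp : Summable (‖p ·‖)) {r : ℝ} (hr1 : r < 1)
    (hr : ∀ z : ℂ, ‖z‖ < 1 → ‖∑' k, p k * z ^ k‖ ≤ r) :
    Tendsto (fun n => ‖(∑' k, p k • s ^ k) ^ n‖) atTop (𝓝 0) := by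
  let B := Algebra.elemental ℂ s
  let _ : NormedCommRing B := { SubringClass.toNormedRing B with mul_comm := mul_comm }
  have _ : NormOneClass B := SubringClass.toNormOneClass B
  let s' : B := ⟨s, Algebra.elemental.self_mem ℂ s⟩
  have hcoe : ((∑' k, p k • s' ^ k : B) : A) = ∑' k, p k • s ^ k :=
    ((summable_smul_pow (s := s') hs hp).hasSum.map B.val continuous_subtype_val).tsum_eq.symm
  have hρ : spectralRadius ℂ (∑' k, p k • s' ^ k) < 1 :=
    (spectralRadius_tsum_smul_pow_le (s := s') hs hp
      fun w hw => norm_tsum_mul_pow_le_of_forall_norm_lt_one hp hr hw).trans_lt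
      (ENNReal.ofReal_lt_one.mpr hr1)
  refine (tendsto_norm_pow_of_spectralRadius_lt_one hρ).congr fun n => ?_
  rw [← hcoe]
  rfl

end BanachAlgebra

namespace l1N

section TaylorSeries

instance : Nontrivial l1N :=
  ⟨⟨lp.single 1 0 1, 0, fun h => by simpa using congr_arg (fun a : l1N => a 0) h⟩⟩

theorem hasSum_norm (a : l1N) : HasSum (‖a ·‖) ‖a‖ := by
  simpa using lp.hasSum_norm (by norm_num) a

def taylorSum (a : l1N) (z : ℂ) : ℂ := ∑' k, a k * z ^ k

@[simp]
theorem taylorSum_zero (z : ℂ) : taylorSum 0 z = 0 := by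
  simp [taylorSum]

theorem norm_taylorSum_le (a : l1N) {z : ℂ} (hz : ‖z‖ ≤ 1) : ‖taylorSum a z‖ ≤ ‖a‖ :=
  tsum_of_norm_bounded (hasSum_norm a) fun k => norm_mul_pow_le hz k

def taylorSumCLM (z : ℂ) (hz : ‖z‖ ≤ 1) : l1N →L[ℂ] ℂ :=
  LinearMap.mkContinuous
    { toFun a := taylorSum a z
      map_add' a b := by
        simp only [taylorSum, lp.coeFn_add, Pi.add_apply, add_mul]
        exact (summable_mul_pow (hasSum_norm a).summable hz).tsum_add
          (summable_mul_pow (hasSum_norm b).summable hz)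
      map_smul' c a := by
        simp only [taylorSum, lp.coeFn_smul, Pi.smul_apply, smul_eq_mul, mul_assoc]
        exact tsum_mul_left }
    1 fun a => by simpa using norm_taylorSum_le a hz

@[simp]
theorem taylorSumCLM_apply (z : ℂ) (hz : ‖z‖ ≤ 1) (a : l1N) : taylorSumCLM z hz a = taylorSum a z :=
  rfl

theorem taylorSum_single (n : ℕ) (c z : ℂ) : taylorSum (lp.single 1 n c) z = c * z ^ n := by
  rw [taylorSum, tsum_eq_single n fun k hk => by simp [hk]]
  simp

theorem eq_zero_of_taylorSum_eq_zero {a : l1N} (h : ∀ z : ℂ, ‖z‖ < 1 → taylorSum a z = 0) :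
    a = 0 := by
  set P := FormalMultilinearSeries.ofScalars ℂ (a ·)
  have hP : 0 < P.radius := one_pos.trans_le <| P.le_radius_of_summable (r := 1) <| by
    simpa [P, FormalMultilinearSeries.ofScalars_norm] using (hasSum_norm a).summable
  have hsum : P.sum =ᶠ[𝓝 0] 0 := by
    filter_upwards [ball_mem_nhds (0 : ℂ) one_pos] with z hz
    simpa [P, FormalMultilinearSeries.sum, FormalMultilinearSeries.ofScalars_apply_eq, taylorSum,
      mul_comm] using h z (mem_ball_zero_iff.mp hz)
  have := (P.hasFPowerSeriesOnBall hP).hasFPowerSeriesAt.eq_zero_of_eventually hsum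
  exact lp.ext ((FormalMultilinearSeries.ofScalars_series_eq_zero ℂ).mp this)

theorem ext_taylorSum {a b : l1N} (h : ∀ z : ℂ, ‖z‖ < 1 → taylorSum a z = taylorSum b z) :
    a = b := by
  refine sub_eq_zero.mp (eq_zero_of_taylorSum_eq_zero fun z hz => ?_)
  rw [← taylorSumCLM_apply z hz.le, map_sub, taylorSumCLM_apply, taylorSumCLM_apply, h z hz,
    sub_self]

end TaylorSeries

section Shift

def shiftSeq (a : ℕ → ℂ) : ℕ → ℂ
  | 0 => 0
  | k + 1 => a k

theorem hasSum_norm_shiftSeq (a : l1N) : HasSum (‖shiftSeq a ·‖) ‖a‖ :=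
  (hasSum_nat_add_iff' 1).mp (by simpa [shiftSeq] using hasSum_norm a)

def shift : l1N →ₗᵢ[ℂ] l1N where
  toFun a := ⟨shiftSeq a, memℓp_gen <| by simpa using (hasSum_norm_shiftSeq a).summable⟩
  map_add' a b := lp.ext <| funext fun k => by
    change shiftSeq (a + b) k = shiftSeq a k + shiftSeq b k
    cases k <;> simp [shiftSeq]
  map_smul' c a := lp.ext <| funext fun k => by
    change shiftSeq (c • a) k = c * shiftSeq a k
    cases k <;> simp [shiftSeq]
  norm_map' a := (hasSum_norm _).unique (hasSum_norm_shiftSeq a)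

theorem taylorSum_shift (a : l1N) {z : ℂ} (hz : ‖z‖ ≤ 1) :
    taylorSum (shift a) z = z * taylorSum a z := by
  have hsucc : ∀ k, shift a (k + 1) * z ^ (k + 1) = z * (a k * z ^ k) := fun k => by
    simp only [shift, LinearIsometry.coe_mk, LinearMap.coe_mk, AddHom.coe_mk, shiftSeq]
    ring
  rw [taylorSum, (summable_mul_pow (hasSum_norm _).summable hz).tsum_eq_zero_add,
    tsum_congr hsucc, tsum_mul_left]
  simp [shift, shiftSeq, taylorSum]

end Shift

section Operators

variable {F : Type*} [NormedAddCommGroup F] [NormedSpace ℂ F]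

theorem hasSum_smul_apply_single (T : l1N →L[ℂ] F) (a : l1N) :
    HasSum (fun n => a n • T (lp.single 1 n 1)) (T a) := by
  have h := (lp.hasSum_single ENNReal.one_ne_top a).mapL T
  simpa [Function.comp_def, ← map_smul, ← lp.single_smul] using h

theorem opNorm_le_of_norm_apply_single_le (T : l1N →L[ℂ] F) {C : ℝ} (hC0 : 0 ≤ C)
    (hC : ∀ n, ‖T (lp.single 1 n 1)‖ ≤ C) : ‖T‖ ≤ C := by
  refine T.opNorm_le_bound hC0 fun a => ?_
  rw [mul_comm]
  refine (hasSum_smul_apply_single T a).norm_le_of_bounded ((hasSum_norm a).mul_right C)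
    fun n => ?_
  rw [norm_smul]
  exact mul_le_mul_of_nonneg_left (hC n) (norm_nonneg _)

def truncation (T : l1N →L[ℂ] F) (k : ℕ) : l1N →L[ℂ] F :=
  ∑ n ∈ Finset.range k,
    (ContinuousLinearMap.toSpanSingleton ℂ (T (lp.single 1 n 1))).comp (lp.evalCLM ℂ _ 1 n)

theorem truncation_apply_single (T : l1N →L[ℂ] F) (k m : ℕ) :
    truncation T k (lp.single 1 m 1) = if m < k then T (lp.single 1 m 1) else 0 := by
  simp [truncation, lp.evalCLM, Pi.single_apply, ite_smul, Finset.sum_ite_eq']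

theorem isCompactOperator_truncation (T : l1N →L[ℂ] F) (k : ℕ) :
    IsCompactOperator (truncation T k) :=
  Submodule.sum_mem (compactOperator (RingHom.id ℂ) l1N F) fun n _ =>
    (isCompactOperator_of_locallyCompactSpace_rng (ContinuousLinearMap.toSpanSingleton ℂ
      (T (lp.single 1 n 1)))).comp_clm (lp.evalCLM ℂ (fun _ : ℕ => ℂ) 1 n)

theorem isCompactOperator_of_tendsto_norm_apply_single [CompleteSpace F] (T : l1N →L[ℂ] F)
    (hT : Tendsto (fun n => ‖T (lp.single 1 n 1)‖) atTop (𝓝 0)) : IsCompactOperator T := by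
  refine isCompactOperator_of_tendsto (Metric.tendsto_atTop.mpr fun ε hε => ?_)
    (.of_forall (isCompactOperator_truncation T))
  obtain ⟨N, hN⟩ := eventually_atTop.mp (hT.eventually_le_const (half_pos hε))
  refine ⟨N, fun k hk => ?_⟩
  refine (dist_eq_norm _ _).trans_lt <| (opNorm_le_of_norm_apply_single_le _ (half_pos hε).le
    fun m => ?_).trans_lt (half_lt_self hε)
  by_cases hm : m < k
  · simp [truncation_apply_single, hm, (half_pos hε).le]
  · simpa [truncation_apply_single, hm] using hN m (by omega)

end Operators

theorem tendsto_apply_of_isCompactOperator {E : Type*} [NormedAddCommGroup E] [NormedSpace ℂ E]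
    {T : E →L[ℂ] l1N} (hT : IsCompactOperator T) {u : ℕ → E} (hu : ∀ n, ‖u n‖ ≤ 1)
    (h : ∀ z : ℂ, ‖z‖ < 1 → Tendsto (fun n => taylorSum (T (u n)) z) atTop (𝓝 0)) :
    Tendsto (fun n => T (u n)) atTop (𝓝 0) :=
  tendsto_of_isCompact_of_forall_tendsto_comp
    (hT.isCompact_closure_image_closedBall (f := (T : E →ₗ[ℂ] l1N)) 1)
    (fun n => subset_closure ⟨u n, mem_closedBall_zero_iff.mpr (hu n), rfl⟩)
    (f := fun z : {z : ℂ // ‖z‖ < 1} => taylorSumCLM z z.2.le)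
    (fun z => (taylorSumCLM _ _).continuous) (fun _ _ hab => ext_taylorSum fun z hz => hab ⟨z, hz⟩)
    fun z => by simpa [Function.comp_def] using h z z.2

section CompositionOperator

theorem taylorSum_pow_apply {M : l1N →L[ℂ] l1N} {z g : ℂ}
    (hM : ∀ a, taylorSum (M a) z = g * taylorSum a z) (n : ℕ) (a : l1N) :
    taylorSum ((M ^ n) a) z = g ^ n * taylorSum a z := by
  induction n generalizing a with
  | zero => simp
  | succ n ih => rw [pow_succ, mul_apply_eq_comp, ih, hM, pow_succ, mul_assoc]

theorem taylorSum_tsum_smul_shift_pow_apply {p : ℕ → ℂ} (hp : Summable (‖p ·‖)) (a : l1N) {z : ℂ}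
    (hz : ‖z‖ ≤ 1) :
    taylorSum ((∑' k, p k • shift.toContinuousLinearMap ^ k) a) z
      = (∑' k, p k * z ^ k) * taylorSum a z := by
  have h := ((summable_smul_pow shift.norm_toContinuousLinearMap_le hp).hasSum.mapL
    (ContinuousLinearMap.apply ℂ l1N a)).mapL (taylorSumCLM z hz)
  have hterm : ∀ k, taylorSumCLM z hz ((p k • shift.toContinuousLinearMap ^ k) a)
      = p k * z ^ k * taylorSum a z := fun k => by
    rw [smul_apply, map_smul, taylorSumCLM_apply,
      taylorSum_pow_apply (fun b => taylorSum_shift b hz), smul_eq_mul, mul_assoc]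
  simp only [ContinuousLinearMap.apply_apply, hterm] at h
  exact h.unique ((summable_mul_pow hp hz).hasSum.mul_right _)

variable {φ : ℂ → ℂ} {T : l1N →L[ℂ] l1N}

theorem tendsto_norm_apply_single_of_forall_norm_le
    (hT : ∀ n (z : ℂ), ‖z‖ < 1 → taylorSum (T (lp.single 1 n 1)) z = φ z ^ n)
    {p : ℕ → ℂ} (hp : Summable (‖p ·‖))
    (hφp : ∀ z : ℂ, ‖z‖ < 1 → HasSum (fun k => p k * z ^ k) (φ z)) {r : ℝ} (hr1 : r < 1)
    (hφr : ∀ z : ℂ, ‖z‖ < 1 → ‖φ z‖ ≤ r) :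
    Tendsto (fun n => ‖T (lp.single 1 n 1)‖) atTop (𝓝 0) := by
  set Φ := ∑' k, p k • shift.toContinuousLinearMap ^ k
  have hΦ : ∀ n a z, ‖z‖ < 1 → taylorSum ((Φ ^ n) a) z = φ z ^ n * taylorSum a z :=
    fun n a z hz => taylorSum_pow_apply (fun b => by
      rw [taylorSum_tsum_smul_shift_pow_apply hp b hz.le, (hφp z hz).tsum_eq]) n a
  have hTΦ : ∀ n, T (lp.single 1 n 1) = (Φ ^ n) (lp.single 1 0 1) := fun n =>
    ext_taylorSum fun z hz => by
      rw [hT n z hz, hΦ n _ z hz, taylorSum_single, one_mul, pow_zero, mul_one]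
  have hΦn : Tendsto (fun n => ‖Φ ^ n‖) atTop (𝓝 0) :=
    tendsto_norm_pow_tsum_smul_pow shift.norm_toContinuousLinearMap_le hp hr1
      fun z hz => (hφp z hz).tsum_eq ▸ hφr z hz
  refine squeeze_zero (fun n => norm_nonneg _) (fun n => ?_) hΦn
  simpa [hTΦ n, lp.norm_single] using (Φ ^ n).le_opNorm (lp.single 1 0 1)

theorem exists_forall_norm_le_of_tendsto_norm_apply_single
    (hT : ∀ n (z : ℂ), ‖z‖ < 1 → taylorSum (T (lp.single 1 n 1)) z = φ z ^ n)
    (h : Tendsto (fun n => ‖T (lp.single 1 n 1)‖) atTop (𝓝 0)) :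
    ∃ r < 1, ∀ z : ℂ, ‖z‖ < 1 → ‖φ z‖ ≤ r := by
  obtain ⟨n, hn0, hn1⟩ := ((eventually_gt_atTop 0).and (h.eventually_lt_const one_pos)).exists
  refine ⟨_, Real.rpow_lt_one (norm_nonneg _) hn1 (inv_pos.mpr (Nat.cast_pos.mpr hn0)),
    fun z hz => ?_⟩
  rw [Real.le_rpow_inv_iff_of_pos (norm_nonneg _) (norm_nonneg _) (Nat.cast_pos.mpr hn0),
    Real.rpow_natCast, ← norm_pow, ← hT n z hz]
  exact norm_taylorSum_le _ hz.le

end CompositionOperator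

end l1N

theorem statement_0_general (φ : ℂ → ℂ)
    (hmaps : ∀ z ∈ ball (0 : ℂ) 1, φ z ∈ ball (0 : ℂ) 1)
    (hφmem : ∃ p : ℕ → ℂ, Summable (fun n : ℕ => ‖p n‖) ∧
      ∀ z ∈ ball (0 : ℂ) 1, HasSum (fun n : ℕ => p n * z ^ n) (φ z))
    (T : l1N →L[ℂ] l1N)
    (hT : ∀ (a : l1N), ∀ z ∈ ball (0 : ℂ) 1,
      ∑' n : ℕ, (T a) n * z ^ n = ∑' n : ℕ, a n * (φ z) ^ n) :
    (IsCompactOperator ⇑T ↔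
      ∃ r : ℝ, r < 1 ∧ ∀ z ∈ ball (0 : ℂ) 1, ‖φ z‖ ≤ r) ∧
    (IsCompactOperator ⇑T ↔
      Tendsto (fun n : ℕ => ‖T (lp.single 1 n (1 : ℂ))‖) atTop (nhds 0)) := by
  obtain ⟨p, hp, hφp⟩ := hφmem
  simp only [mem_ball_zero_iff] at hmaps hφp hT ⊢
  have hTδ : ∀ n (z : ℂ), ‖z‖ < 1 → l1N.taylorSum (T (lp.single 1 n 1)) z = φ z ^ n :=
    fun n z hz => ((hT _ z hz).trans (l1N.taylorSum_single n 1 (φ z))).trans (one_mul _)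
  have hcompact : IsCompactOperator T ↔ Tendsto (fun n => ‖T (lp.single 1 n 1)‖) atTop (𝓝 0) := by
    refine ⟨fun hc => ?_, l1N.isCompactOperator_of_tendsto_norm_apply_single T⟩
    refine tendsto_zero_iff_norm_tendsto_zero.mp <| l1N.tendsto_apply_of_isCompactOperator hc
      (fun n => by simp [lp.norm_single]) fun z hz => ?_
    simpa only [hTδ _ z hz] using tendsto_pow_atTop_nhds_zero_of_norm_lt_one (hmaps z hz)
  have hbound : (∃ r : ℝ, r < 1 ∧ ∀ z : ℂ, ‖z‖ < 1 → ‖φ z‖ ≤ r) ↔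
      Tendsto (fun n => ‖T (lp.single 1 n 1)‖) atTop (𝓝 0) :=
    ⟨fun ⟨_, hr1, hφr⟩ => l1N.tendsto_norm_apply_single_of_forall_norm_le hTδ hp hφp hr1 hφr,
      l1N.exists_forall_norm_le_of_tendsto_norm_apply_single hTδ⟩
  exact ⟨hcompact.trans hbound.symm, hcompact⟩

/-- Proposition 2.1.  Let `φ : 𝔻 → 𝔻` be a non-constant analytic
function belonging to `A⁺(𝕋)` such that the composition operator `C_φ : f ↦ f ∘ φ` maps
`A⁺(𝕋)` into itself; `T` is `C_φ` read through coefficient sequences.  Then `C_φ` is a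
compact operator iff `sup_{z ∈ 𝔻} |φ z| < 1`; equivalently, iff
`‖φⁿ‖_{A⁺(𝕋)} = ‖T δₙ‖ → 0` as `n → ∞` (where `δₙ` is the coefficient sequence of `zⁿ`). -/
theorem statement_0 (φ : ℂ → ℂ)
    (hanal : DifferentiableOn ℂ φ (ball (0 : ℂ) 1))
    (hmaps : ∀ z ∈ ball (0 : ℂ) 1, φ z ∈ ball (0 : ℂ) 1)
    (hnc : ∃ z w, z ∈ ball (0 : ℂ) 1 ∧ w ∈ ball (0 : ℂ) 1 ∧ φ z ≠ φ w)
    (hφmem : ∃ p : ℕ → ℂ, Summable (fun n : ℕ => ‖p n‖) ∧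
      ∀ z ∈ ball (0 : ℂ) 1, HasSum (fun n : ℕ => p n * z ^ n) (φ z))
    (T : l1N →L[ℂ] l1N)
    (hT : ∀ (a : l1N), ∀ z ∈ ball (0 : ℂ) 1,
      ∑' n : ℕ, (T a) n * z ^ n = ∑' n : ℕ, a n * (φ z) ^ n) :
    (IsCompactOperator ⇑T ↔
      ∃ r : ℝ, r < 1 ∧ ∀ z ∈ ball (0 : ℂ) 1, ‖φ z‖ ≤ r) ∧
    (IsCompactOperator ⇑T ↔
      Tendsto (fun n : ℕ => ‖T (lp.single 1 n (1 : ℂ))‖) atTop (nhds 0)) :=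
  statement_0_general φ hmaps hφmem T hT
end
end

section
/- Let φ : ℂ₀ → ℂ be a non-constant analytic function of the form φ(s) = c₀ s + ψ(s), with c₀ ∈ ℕ₀ and ψ ∈ 𝒟. (i) If f∘φ ∈ A⁺ for every f ∈ A⁺, then there exists a constant C such that for every n ≥ 1 the function n^{-φ} belongs to A⁺ and ‖n^{-φ}‖_{A⁺} ≤ C. (ii) Conversely, if n^{-φ} ∈ A⁺ for every n ≥ 1 with sup_{n≥1} ‖n^{-φ}‖_{A⁺} ≤ C < ∞, then φ maps ℂ₀ into ℂ₀, and for every f ∈ A⁺ one has f∘φ ∈ A⁺ with ‖f∘φ‖_{A⁺} ≤ C ‖f‖_{A⁺}. -/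
open Complex Filter
open scoped ENNReal

noncomputable section

/-- `f` has the Dirichlet series `∑ a n * (n+1)^{-s}` on the half-plane `re s > σ`. -/
def HasDirichletSeriesOn (f : ℂ → ℂ) (a : ℕ → ℂ) (σ : ℝ) : Prop :=
  ∀ s : ℂ, σ < s.re → HasSum (fun n : ℕ => a n * (n + 1 : ℂ) ^ (-s)) (f s)

/-- `f` belongs to the Wiener–Dirichlet algebra `𝒜⁺`, with (absolutely summable)
coefficient sequence `a`, where `a n` is the coefficient of `(n+1)^{-s}`.
The norm of `f` in `𝒜⁺` is `∑' n, Complex.abs (a n)`. -/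
def MemAplus (f : ℂ → ℂ) (a : ℕ → ℂ) : Prop :=
  Summable (fun n : ℕ => ‖a n‖) ∧ HasDirichletSeriesOn f a 0

/-- `ψ` belongs to the class `𝒟` of convergent Dirichlet series: it is analytic on
`re s > 0` and is representable by a convergent Dirichlet series for `re s` large enough. -/
def MemD (ψ : ℂ → ℂ) : Prop :=
  DifferentiableOn ℂ ψ {s : ℂ | 0 < s.re} ∧ ∃ a σ, HasDirichletSeriesOn ψ a σ

/-!
Everything happens in the Banach space `ℓ¹` of coefficient sequences, on which evaluating the
Dirichlet series at a point of the closed half-plane `re s ≥ 0` is a continuous linear functional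
of norm at most `1`.

(i) If `f ↦ f ∘ φ` preserves `𝒜⁺`, then `φ` maps `ℂ₀` into `ℂ₀`: otherwise the indicator of a value
`φ s₀` with `re ≤ 0` is `0` on `ℂ₀`, hence in `𝒜⁺`, but its composition with the non-constant
analytic `φ` is discontinuous at `s₀`. Since coefficients are unique, composition is then a linear
map `ℓ¹ → ℓ¹` with closed graph, hence bounded, and `n^{-φ}` is the image of a unit vector.

(ii) `|n^{-φ(s)}| ≤ C` for all `n` forces `re φ(s) ≥ 0`, and the open mapping theorem upgrades this
to `re φ(s) > 0`. Then `f ∘ φ = ∑ aₙ n^{-φ}` converges absolutely in `ℓ¹`, with norm at most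
`C ∑ |aₙ|`.
-/

open Topology

local notation "ℓ¹" => lp (fun _ : ℕ => ℂ) 1

namespace WienerDirichlet

def dirichletSeries (a : ℕ → ℂ) (s : ℂ) : ℂ :=
  ∑' n : ℕ, a n * (n + 1 : ℂ) ^ (-s)

lemma norm_natCast_add_one_cpow_neg (n : ℕ) (s : ℂ) :
    ‖(n + 1 : ℂ) ^ (-s)‖ = ((n : ℝ) + 1) ^ (-s.re) := by
  simpa using norm_natCast_cpow_of_pos n.succ_pos (-s)

lemma norm_natCast_add_one_cpow_neg_le_one (n : ℕ) {s : ℂ} (hs : 0 ≤ s.re) :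
    ‖(n + 1 : ℂ) ^ (-s)‖ ≤ 1 := by
  rw [norm_natCast_add_one_cpow_neg]
  exact Real.rpow_le_one_of_one_le_of_nonpos (by simp) (neg_nonpos.mpr hs)

lemma norm_dirichletTerm_le {a : ℕ → ℂ} (n : ℕ) {s : ℂ} (hs : 0 ≤ s.re) :
    ‖a n * (n + 1 : ℂ) ^ (-s)‖ ≤ ‖a n‖ := by
  rw [norm_mul]
  exact mul_le_of_le_one_right (norm_nonneg _) (norm_natCast_add_one_cpow_neg_le_one n hs)

lemma summable_dirichletTerm {a : ℕ → ℂ} (ha : Summable fun n => ‖a n‖) {s : ℂ}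
    (hs : 0 ≤ s.re) : Summable fun n : ℕ => a n * (n + 1 : ℂ) ^ (-s) :=
  ha.of_norm_bounded fun n => norm_dirichletTerm_le n hs

lemma norm_dirichletSeries_le {a : ℕ → ℂ} (ha : Summable fun n => ‖a n‖) {s : ℂ}
    (hs : 0 ≤ s.re) : ‖dirichletSeries a s‖ ≤ ∑' n, ‖a n‖ :=
  tsum_of_norm_bounded ha.hasSum fun n => norm_dirichletTerm_le n hs

lemma memAplus_dirichletSeries {a : ℕ → ℂ} (ha : Summable fun n => ‖a n‖) :
    MemAplus (dirichletSeries a) a :=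
  ⟨ha, fun _ hs => (summable_dirichletTerm ha hs.le).hasSum⟩

lemma eq_dirichletSeries_of_memAplus {f : ℂ → ℂ} {a : ℕ → ℂ} (h : MemAplus f a) {s : ℂ}
    (hs : 0 < s.re) : f s = dirichletSeries a s :=
  (h.2 s hs).tsum_eq.symm

lemma norm_le_tsum_of_memAplus {f : ℂ → ℂ} {a : ℕ → ℂ} (h : MemAplus f a) {s : ℂ}
    (hs : 0 < s.re) : ‖f s‖ ≤ ∑' n, ‖a n‖ :=
  eq_dirichletSeries_of_memAplus h hs ▸ norm_dirichletSeries_le h.1 hs.le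

lemma continuousOn_dirichletSeries {a : ℕ → ℂ} (ha : Summable fun n => ‖a n‖) :
    ContinuousOn (dirichletSeries a) {s : ℂ | 0 < s.re} :=
  continuousOn_tsum (fun n => (continuous_const.mul
      (continuous_neg.const_cpow (Or.inl (Nat.cast_add_one_ne_zero n)))).continuousOn)
    ha fun n _ hs => norm_dirichletTerm_le n (le_of_lt hs)

/-- `a n` is the coefficient of `(n + 1)⁻ˢ`, whereas `LSeries f` pairs `f n` with `n⁻ˢ`. -/
def lseriesCoeff (a : ℕ → ℂ) : ℕ → ℂ
  | 0 => 0
  | n + 1 => a n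

lemma hasSum_term_lseriesCoeff_iff {a : ℕ → ℂ} {s L : ℂ} :
    HasSum (LSeries.term (lseriesCoeff a) s) L ↔
      HasSum (fun n : ℕ => a n * (n + 1 : ℂ) ^ (-s)) L := by
  rw [← hasSum_nat_add_iff' 1]
  simp [LSeries.term_def, cpow_neg, div_eq_mul_inv, lseriesCoeff]

lemma eq_zero_of_dirichletSeries_eq_zero {a : ℕ → ℂ} (ha : Summable fun n => ‖a n‖)
    (h : ∀ s : ℂ, 0 < s.re → dirichletSeries a s = 0) : a = 0 := by
  have hzero : (fun x : ℝ => LSeries (lseriesCoeff a) x) =ᶠ[atTop] 0 := by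
    filter_upwards [eventually_gt_atTop 0] with x hx
    have hx' : 0 < (x : ℂ).re := by simpa using hx
    rw [LSeries, (hasSum_term_lseriesCoeff_iff.mpr
      (summable_dirichletTerm ha hx'.le).hasSum).tsum_eq]
    exact h x hx'
  have hsummable : LSeriesSummable (lseriesCoeff a) 0 :=
    (hasSum_term_lseriesCoeff_iff.mpr (summable_dirichletTerm ha le_rfl).hasSum).summable
  have habs : LSeries.abscissaOfAbsConv (lseriesCoeff a) ≠ ⊤ :=
    (hsummable.abscissaOfAbsConv_le.trans_lt (EReal.coe_lt_top _)).ne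
  funext n
  exact (LSeries_eventually_eq_zero_iff'.mp hzero).resolve_right habs (n + 1) n.succ_ne_zero

lemma memℓp_one_iff {a : ℕ → ℂ} : Memℓp a 1 ↔ Summable fun n => ‖a n‖ := by
  rw [memℓp_gen_iff (by simp)]
  simp

lemma lp_one_norm_eq_tsum (A : ℓ¹) : ‖A‖ = ∑' n, ‖A n‖ := by
  rw [lp.norm_eq_tsum_rpow (by simp)]
  simp

lemma summable_norm_lp_one (A : ℓ¹) : Summable fun n => ‖A n‖ :=
  memℓp_one_iff.mp A.2

def dirichletEval (s : ℂ) (hs : 0 ≤ s.re) : ℓ¹ →L[ℂ] ℂ :=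
  LinearMap.mkContinuous
    { toFun := fun A => dirichletSeries A s
      map_add' := fun A B => by
        simp only [dirichletSeries, lp.coeFn_add, Pi.add_apply, add_mul]
        exact (summable_dirichletTerm (summable_norm_lp_one A) hs).tsum_add
          (summable_dirichletTerm (summable_norm_lp_one B) hs)
      map_smul' := fun c A => by
        simp only [dirichletSeries, lp.coeFn_smul, Pi.smul_apply, smul_eq_mul, mul_assoc,
          RingHom.id_apply]
        exact tsum_mul_left }
    1 fun A => by
      simpa [lp_one_norm_eq_tsum] using norm_dirichletSeries_le (summable_norm_lp_one A) hs

lemma dirichletEval_apply {s : ℂ} (hs : 0 ≤ s.re) (A : ℓ¹) :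
    dirichletEval s hs A = dirichletSeries A s := rfl

lemma memAplus_of_dirichletSeries_eq {f : ℂ → ℂ} (A : ℓ¹)
    (h : ∀ s : ℂ, 0 < s.re → dirichletSeries A s = f s) : MemAplus f A :=
  ⟨summable_norm_lp_one A, fun s hs =>
    h s hs ▸ (summable_dirichletTerm (summable_norm_lp_one A) hs.le).hasSum⟩

lemma dirichletSeries_single (k : ℕ) (s : ℂ) :
    dirichletSeries (lp.single 1 k 1 : ℓ¹) s = (k + 1 : ℂ) ^ (-s) := by
  rw [dirichletSeries, tsum_eq_single k fun n hn => by simp [lp.single_apply, hn]]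
  simp [lp.single_apply]

theorem exists_continuousLinearMap_forall_mem_of_isClosed {𝕜 E F : Type*}
    [NontriviallyNormedField 𝕜] [NormedAddCommGroup E] [NormedSpace 𝕜 E] [CompleteSpace E]
    [NormedAddCommGroup F] [NormedSpace 𝕜 F] [CompleteSpace F]
    (G : Submodule 𝕜 (E × F)) (hG : IsClosed (G : Set (E × F)))
    (hex : ∀ x, ∃ y, (x, y) ∈ G) (hzero : ∀ y, ((0 : E), y) ∈ G → y = 0) :
    ∃ T : E →L[𝕜] F, ∀ x, (x, T x) ∈ G := by
  choose T hT using hex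
  have huniq {x y} (h : (x, y) ∈ G) : T x = y :=
    sub_eq_zero.mp (hzero _ (by simpa using G.sub_mem (hT x) h))
  let L : E →ₗ[𝕜] F :=
    { toFun := T
      map_add' := fun x y => huniq (by simpa using G.add_mem (hT x) (hT y))
      map_smul' := fun c x => huniq (by simpa using G.smul_mem c (hT x)) }
  have hgraph : (L.graph : Set (E × F)) = G := by
    ext ⟨x, y⟩
    refine ⟨fun h => ?_, fun h => (LinearMap.mem_graph_iff L _).mpr (huniq h).symm⟩
    obtain rfl : y = T x := (LinearMap.mem_graph_iff L _).mp h
    exact hT x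
  exact ⟨⟨L, L.continuous_of_isClosed_graph (hgraph ▸ hG)⟩, hT⟩

theorem exists_compositionOperator {φ : ℂ → ℂ} (hpos : ∀ s : ℂ, 0 < s.re → 0 < (φ s).re)
    (hcomp : ∀ f a, MemAplus f a → ∃ b, MemAplus (f ∘ φ) b) :
    ∃ T : ℓ¹ →L[ℂ] ℓ¹, ∀ (A : ℓ¹) (s : ℂ), 0 < s.re →
      dirichletSeries (T A) s = dirichletSeries A (φ s) := by
  let G : Submodule ℂ (ℓ¹ × ℓ¹) := ⨅ s : {s : ℂ // 0 < s.re}, LinearMap.ker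
    (((dirichletEval s s.2.le).comp (ContinuousLinearMap.snd ℂ ℓ¹ ℓ¹) -
      (dirichletEval (φ s) (hpos s s.2).le).comp (ContinuousLinearMap.fst ℂ ℓ¹ ℓ¹) :
        ℓ¹ × ℓ¹ →L[ℂ] ℂ) : ℓ¹ × ℓ¹ →ₗ[ℂ] ℂ)
  have hmem {A B : ℓ¹} : (A, B) ∈ G ↔
      ∀ s : ℂ, 0 < s.re → dirichletSeries B s = dirichletSeries A (φ s) := by
    simp [G, Submodule.mem_iInf, sub_eq_zero, dirichletEval_apply]
  have hclosed : IsClosed (G : Set (ℓ¹ × ℓ¹)) := by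
    simp only [G, Submodule.coe_iInf]
    exact isClosed_iInter fun s => ContinuousLinearMap.isClosed_ker _
  have hex (A : ℓ¹) : ∃ B, (A, B) ∈ G := by
    obtain ⟨b, hb⟩ := hcomp _ _ (memAplus_dirichletSeries (summable_norm_lp_one A))
    exact ⟨⟨b, memℓp_one_iff.mpr hb.1⟩,
      hmem.mpr fun s hs => (eq_dirichletSeries_of_memAplus hb hs).symm⟩
  have hzero (B : ℓ¹) (hB : (0, B) ∈ G) : B = 0 := by
    apply lp.ext
    refine eq_zero_of_dirichletSeries_eq_zero (summable_norm_lp_one B) fun s hs => ?_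
    simpa [dirichletSeries] using hmem.mp hB s hs
  obtain ⟨T, hT⟩ := exists_continuousLinearMap_forall_mem_of_isClosed G hclosed hex hzero
  exact ⟨T, fun A => hmem.mp (hT A)⟩

lemma not_eventually_eq_of_exists_ne {φ : ℂ → ℂ} {U : Set ℂ} (hφ : AnalyticOnNhd ℂ φ U)
    (hU : IsPreconnected U) (hnc : ∃ s₁ s₂, s₁ ∈ U ∧ s₂ ∈ U ∧ φ s₁ ≠ φ s₂) {s₀ : ℂ}
    (hs₀ : s₀ ∈ U) : ¬ ∀ᶠ s in 𝓝 s₀, φ s = φ s₀ := by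
  intro h
  obtain ⟨s₁, s₂, h₁, h₂, hne⟩ := hnc
  have heq := hφ.eqOn_of_preconnected_of_eventuallyEq analyticOnNhd_const hU hs₀ h
  exact hne ((heq h₁).trans (heq h₂).symm)

lemma isOpen_image_of_exists_ne {φ : ℂ → ℂ} {U : Set ℂ} (hφ : AnalyticOnNhd ℂ φ U)
    (hU : IsPreconnected U) (hUo : IsOpen U) (hnc : ∃ s₁ s₂, s₁ ∈ U ∧ s₂ ∈ U ∧ φ s₁ ≠ φ s₂) :
    IsOpen (φ '' U) := by
  refine ((hφ.is_constant_or_isOpen hU).resolve_left ?_) U subset_rfl hUo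
  rintro ⟨w, hw⟩
  obtain ⟨s₁, s₂, h₁, h₂, hne⟩ := hnc
  exact hne ((hw s₁ h₁).trans (hw s₂ h₂).symm)

theorem re_pos_of_comp_memAplus {φ : ℂ → ℂ} (hφ : AnalyticOnNhd ℂ φ {s : ℂ | 0 < s.re})
    (hnc : ∃ s₁ s₂ : ℂ, 0 < s₁.re ∧ 0 < s₂.re ∧ φ s₁ ≠ φ s₂)
    (hcomp : ∀ f a, MemAplus f a → ∃ b, MemAplus (f ∘ φ) b) :
    ∀ s : ℂ, 0 < s.re → 0 < (φ s).re := by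
  intro s₀ hs₀
  by_contra! hle
  let f : ℂ → ℂ := fun w => if w = φ s₀ then 1 else 0
  have hf : MemAplus f 0 := by
    refine ⟨by simp, fun s hs => ?_⟩
    have hne : s ≠ φ s₀ := fun h => by linarith [h ▸ hs]
    simp [f, hne]
  obtain ⟨b, hb⟩ := hcomp f 0 hf
  have hU : {s : ℂ | 0 < s.re} ∈ 𝓝 s₀ := (isOpen_re_gt 0).mem_nhds hs₀
  have hcont : ContinuousAt (dirichletSeries b) s₀ :=
    (continuousOn_dirichletSeries hb.1).continuousAt hU
  have hone : dirichletSeries b s₀ = 1 := by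
    simp [← eq_dirichletSeries_of_memAplus hb hs₀, f]
  refine not_eventually_eq_of_exists_ne hφ (convex_halfSpace_re_gt 0).isPreconnected hnc hs₀ ?_
  filter_upwards [hU, hcont.eventually_ne (hone ▸ one_ne_zero)] with s hs hne
  by_contra h
  exact hne (by simp [← eq_dirichletSeries_of_memAplus hb hs, f, h])

lemma re_nonneg_of_norm_natCast_cpow_neg_le {w : ℂ} {C : ℝ}
    (h : ∀ n : ℕ, 1 ≤ n → ‖(n : ℂ) ^ (-w)‖ ≤ C) : 0 ≤ w.re := by
  by_contra! hw
  have hnorm : ∀ᶠ n : ℕ in atTop, (n : ℝ) ^ (-w.re) = ‖(n : ℂ) ^ (-w)‖ := by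
    filter_upwards [eventually_ge_atTop 1] with n hn
    simp [norm_natCast_cpow_of_pos hn]
  have htend : Tendsto (fun n : ℕ => ‖(n : ℂ) ^ (-w)‖) atTop atTop :=
    ((tendsto_rpow_atTop (neg_pos.mpr hw)).comp tendsto_natCast_atTop_atTop).congr' hnorm
  obtain ⟨n, hC, hn⟩ := ((htend.eventually_gt_atTop C).and (eventually_ge_atTop 1)).exists
  exact (h n hn).not_gt hC

theorem re_pos_of_bounded {φ : ℂ → ℂ} {C : ℝ} (hφ : AnalyticOnNhd ℂ φ {s : ℂ | 0 < s.re})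
    (hnc : ∃ s₁ s₂ : ℂ, 0 < s₁.re ∧ 0 < s₂.re ∧ φ s₁ ≠ φ s₂)
    (hbd : ∀ n : ℕ, 1 ≤ n → ∃ a, MemAplus (fun s : ℂ => (n : ℂ) ^ (-(φ s))) a ∧
      ∑' k : ℕ, ‖a k‖ ≤ C) :
    ∀ s : ℂ, 0 < s.re → 0 < (φ s).re := by
  have hnonneg : φ '' {s : ℂ | 0 < s.re} ⊆ {w : ℂ | 0 ≤ w.re} := by
    rintro _ ⟨s, hs, rfl⟩
    refine re_nonneg_of_norm_natCast_cpow_neg_le (C := C) fun n hn => ?_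
    obtain ⟨a, ha, haC⟩ := hbd n hn
    exact (norm_le_tsum_of_memAplus ha hs).trans haC
  have hopen := isOpen_image_of_exists_ne hφ (convex_halfSpace_re_gt 0).isPreconnected
    (isOpen_re_gt 0) hnc
  have hpos := hopen.subset_interior_iff.mpr hnonneg
  rw [interior_setOfPred_le_re] at hpos
  exact fun s hs => hpos ⟨s, hs, rfl⟩

theorem exists_memAplus_comp_of_bounded {φ : ℂ → ℂ} {C : ℝ}
    (hpos : ∀ s : ℂ, 0 < s.re → 0 < (φ s).re)
    (hbd : ∀ n : ℕ, 1 ≤ n → ∃ a, MemAplus (fun s : ℂ => (n : ℂ) ^ (-(φ s))) a ∧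
      ∑' k : ℕ, ‖a k‖ ≤ C)
    {f : ℂ → ℂ} {a : ℕ → ℂ} (hfa : MemAplus f a) :
    ∃ b, MemAplus (f ∘ φ) b ∧ ∑' k : ℕ, ‖b k‖ ≤ C * ∑' k : ℕ, ‖a k‖ := by
  choose b hb hbC using fun k : ℕ => hbd (k + 1) (Nat.le_add_left 1 k)
  let B : ℕ → ℓ¹ := fun k => ⟨b k, memℓp_one_iff.mpr (hb k).1⟩
  have hB (k : ℕ) : ‖a k • B k‖ ≤ ‖a k‖ * C := by
    rw [norm_smul, lp_one_norm_eq_tsum]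
    exact mul_le_mul_of_nonneg_left (hbC k) (norm_nonneg _)
  have hsum : Summable fun k => a k • B k :=
    Summable.of_norm_bounded (g := fun k => ‖a k‖ * C) (hfa.1.mul_right C) hB
  let A : ℓ¹ := ∑' k, a k • B k
  have hA : MemAplus (f ∘ φ) A := by
    refine memAplus_of_dirichletSeries_eq A fun s hs => ?_
    calc dirichletSeries A s = dirichletEval s hs.le A := rfl
      _ = ∑' k, a k * dirichletSeries (b k) s := by
        rw [ContinuousLinearMap.map_tsum _ hsum]
        exact tsum_congr fun k => by rw [map_smul, smul_eq_mul]; rfl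
      _ = ∑' k, a k * (k + 1 : ℂ) ^ (-φ s) := tsum_congr fun k => by
        rw [← eq_dirichletSeries_of_memAplus (hb k) hs]
        push_cast
        rfl
      _ = (f ∘ φ) s := (eq_dirichletSeries_of_memAplus hfa (hpos s hs)).symm
  have hnorm : ‖A‖ ≤ C * ∑' k : ℕ, ‖a k‖ := by
    rw [mul_comm, ← tsum_mul_right]
    exact tsum_of_norm_bounded (hfa.1.mul_right C).hasSum hB
  exact ⟨A, hA, lp_one_norm_eq_tsum A ▸ hnorm⟩

theorem exists_bound_of_comp_memAplus {φ : ℂ → ℂ} (hφ : AnalyticOnNhd ℂ φ {s : ℂ | 0 < s.re})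
    (hnc : ∃ s₁ s₂ : ℂ, 0 < s₁.re ∧ 0 < s₂.re ∧ φ s₁ ≠ φ s₂)
    (hcomp : ∀ f a, MemAplus f a → ∃ b, MemAplus (f ∘ φ) b) :
    ∃ C : ℝ, ∀ n : ℕ, 1 ≤ n →
      ∃ a, MemAplus (fun s : ℂ => (n : ℂ) ^ (-(φ s))) a ∧ ∑' k : ℕ, ‖a k‖ ≤ C := by
  obtain ⟨T, hT⟩ := exists_compositionOperator (re_pos_of_comp_memAplus hφ hnc hcomp) hcomp
  refine ⟨‖T‖, fun n hn => ?_⟩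
  obtain ⟨k, rfl⟩ : ∃ k, n = k + 1 := ⟨n - 1, by omega⟩
  let e : ℓ¹ := lp.single 1 k 1
  refine ⟨T e, memAplus_of_dirichletSeries_eq _ fun s hs => ?_, ?_⟩
  · rw [hT e s hs, dirichletSeries_single]
    push_cast
    rfl
  · rw [← lp_one_norm_eq_tsum]
    calc ‖T e‖ ≤ ‖T‖ * ‖e‖ := T.le_opNorm e
      _ = ‖T‖ := by simp [e, lp.norm_single]

end WienerDirichlet

theorem statement_1_general (φ : ℂ → ℂ)
    (hanal : DifferentiableOn ℂ φ {s : ℂ | 0 < s.re})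
    (hnc : ∃ s₁ s₂ : ℂ, 0 < s₁.re ∧ 0 < s₂.re ∧ φ s₁ ≠ φ s₂) :
    ((∀ f a, MemAplus f a → ∃ b, MemAplus (f ∘ φ) b) →
      ∃ C : ℝ, ∀ n : ℕ, 1 ≤ n →
        ∃ a, MemAplus (fun s : ℂ => (n : ℂ) ^ (-(φ s))) a ∧
          ∑' k : ℕ, ‖a k‖ ≤ C) ∧
    (∀ C : ℝ,
      (∀ n : ℕ, 1 ≤ n →
        ∃ a, MemAplus (fun s : ℂ => (n : ℂ) ^ (-(φ s))) a ∧
          ∑' k : ℕ, ‖a k‖ ≤ C) →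
      (∀ s : ℂ, 0 < s.re → 0 < (φ s).re) ∧
      (∀ f a, MemAplus f a → ∃ b, MemAplus (f ∘ φ) b ∧
        ∑' k : ℕ, ‖b k‖ ≤ C * ∑' k : ℕ, ‖a k‖)) := by
  have hφ : AnalyticOnNhd ℂ φ {s : ℂ | 0 < s.re} := hanal.analyticOnNhd (isOpen_re_gt 0)
  refine ⟨WienerDirichlet.exists_bound_of_comp_memAplus hφ hnc, fun C hbd => ?_⟩
  have hpos := WienerDirichlet.re_pos_of_bounded hφ hnc hbd
  exact ⟨hpos, fun f a hfa => WienerDirichlet.exists_memAplus_comp_of_bounded hpos hbd hfa⟩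

theorem statement_1 (φ ψ : ℂ → ℂ) (c₀ : ℕ)
    (hform : ∀ s : ℂ, 0 < s.re → φ s = (c₀ : ℂ) * s + ψ s)
    (hψ : MemD ψ)
    (hanal : DifferentiableOn ℂ φ {s : ℂ | 0 < s.re})
    (hnc : ∃ s₁ s₂ : ℂ, 0 < s₁.re ∧ 0 < s₂.re ∧ φ s₁ ≠ φ s₂) :
    ((∀ f a, MemAplus f a → ∃ b, MemAplus (f ∘ φ) b) →
      ∃ C : ℝ, ∀ n : ℕ, 1 ≤ n →
        ∃ a, MemAplus (fun s : ℂ => (n : ℂ) ^ (-(φ s))) a ∧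
          ∑' k : ℕ, ‖a k‖ ≤ C) ∧
    (∀ C : ℝ,
      (∀ n : ℕ, 1 ≤ n →
        ∃ a, MemAplus (fun s : ℂ => (n : ℂ) ^ (-(φ s))) a ∧
          ∑' k : ℕ, ‖a k‖ ≤ C) →
      (∀ s : ℂ, 0 < s.re → 0 < (φ s).re) ∧
      (∀ f a, MemAplus f a → ∃ b, MemAplus (f ∘ φ) b ∧
        ∑' k : ℕ, ‖b k‖ ≤ C * ∑' k : ℕ, ‖a k‖)) :=
  statement_1_general φ hanal hnc
end
end

section
/- Let 𝐁 = {z = (z_j)_{j≥1} ∈ 𝔻^ℕ : z_j → 0} and let φ = (φ_j)_{j≥1} : 𝐁 → 𝐁 be an analytic map such that C_φ maps A⁺(𝕋^∞) into itself. Suppose C_φ is an automorphism of A⁺(𝕋^∞) (a bijection of A⁺(𝕋^∞) onto itself), and suppose moreover that for each k ∈ ℕ there are an integer d_k ≥ 1 and an analytic function u_k on 𝐁 with u_k(0) ≠ 0 such that φ_k(z) = z_k^{d_k} u_k(z) for all z ∈ 𝐁. Then there is a sequence (ε_j)_{j≥1} of complex numbers of modulus 1 such that φ(z) = (ε_j z_j)_{j≥1}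 for all z ∈ 𝐁. -/
open Complex Filter
open scoped ENNReal

noncomputable section

/-- The Banach space `ℓ¹` over finitely supported multi-indices, modelling the Wiener
algebra `A⁺(𝕋^∞)` of absolutely convergent Taylor series in countably many variables. -/
abbrev CoeffInf := lp (fun _ : ℕ →₀ ℕ => ℂ) 1

/-- The open unit ball `𝐁 = 𝔻^∞ ∩ c₀` of the space `c₀`: sequences of modulus `< 1`
tending to `0`. -/
def ballB : Set (ℕ → ℂ) :=
  {z | (∀ j, ‖z j‖ < 1) ∧ Tendsto (fun j => z j) atTop (nhds 0)}

/-- The monomial `z^α` for a finitely supported multi-index `α`. -/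
def monomial (z : ℕ → ℂ) (α : ℕ →₀ ℕ) : ℂ := α.prod fun j m => z j ^ m

/-!
Write `φ_k z = ∑ b_k(α) z ^ α`. Since every `α` in the support of `b_k` has `α_k ≥ 1`, `φ` maps
the axis `w e_k` into itself, `φ (w e_k) = f w • e_k`. Surjectivity of `C_φ` and the open mapping
theorem give uniformly bounded `g_m` with `g_m ∘ f = (· ^ m)`; hence `g_m = g_1 ^ m`, so `g_1` is
a left inverse of `f` bounded by `1`, and the Schwarz lemma gives `‖b_k(e_k)‖ = ‖f' 0‖ ≥ 1`.

For every `q` with `q_k = 1`, `‖q_j‖ ≤ 1`, the slice `w ↦ φ_k (w • q)` maps the disc into itself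
with derivative `b_k(e_k)` at `0`, so by the equality case of Schwarz it is linear: the homogeneous
parts of `φ_k` of degree `n ≠ 1` vanish at `q`. The Kronecker substitution `q_j = v ^ (B ^ j)`
(`j ≠ k`) turns such a homogeneous part into a power series in `v` whose coefficients are the
single `b_k(α)`, so `b_k` is supported on `e_k`.
-/

open Metric Set FormalMultilinearSeries Finsupp
open scoped Topology

section OneVariable

variable {c : ℕ → ℂ}

theorem hasFPowerSeriesOnBall_ofScalarsSum (hc : Summable fun n => ‖c n‖) :
    HasFPowerSeriesOnBall (ofScalarsSum (E := ℂ) c) (ofScalars ℂ c) 0 1 := by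
  have hr : (1 : ℝ≥0∞) ≤ (ofScalars ℂ c).radius :=
    (ofScalars ℂ c).le_radius_of_summable_norm (by simpa [ofScalars_norm] using hc)
  exact ((ofScalars ℂ c).hasFPowerSeriesOnBall (zero_lt_one.trans_le hr)).mono one_pos hr

theorem eq_of_eqOn_ofScalarsSum {c' : ℕ → ℂ} (hc : Summable fun n => ‖c n‖)
    (hc' : Summable fun n => ‖c' n‖)
    (h : EqOn (ofScalarsSum (E := ℂ) c) (ofScalarsSum c') (ball 0 1)) : c = c' := by
  have h' := (hasFPowerSeriesOnBall_ofScalarsSum hc').hasFPowerSeriesAt.congr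
    (eventuallyEq_of_mem (ball_mem_nhds 0 one_pos) h.symm)
  exact (ofScalars_series_eq_iff ℂ c c').1
    ((hasFPowerSeriesOnBall_ofScalarsSum hc).hasFPowerSeriesAt.eq_formalMultilinearSeries h')

theorem deriv_ofScalarsSum_zero (hc : Summable fun n => ‖c n‖) :
    deriv (ofScalarsSum (E := ℂ) c) 0 = c 1 := by
  simp [(hasFPowerSeriesOnBall_ofScalarsSum hc).hasFPowerSeriesAt.deriv]

theorem differentiableOn_ofScalarsSum (hc : Summable fun n => ‖c n‖) :
    DifferentiableOn ℂ (ofScalarsSum (E := ℂ) c) (ball 0 1) := by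
  have h := (hasFPowerSeriesOnBall_ofScalarsSum hc).differentiableOn
  rwa [← ENNReal.coe_one, Metric.eball_coe, NNReal.coe_one] at h

theorem mapsTo_ofScalarsSum_closedBall (hle : ∀ w ∈ ball (0 : ℂ) 1, ‖ofScalarsSum c w‖ ≤ 1)
    (h0 : c 0 = 0) :
    MapsTo (ofScalarsSum (E := ℂ) c) (ball 0 1) (closedBall (ofScalarsSum c 0) 1) := by
  intro w hw
  simpa [ofScalarsSum_zero, h0] using hle w hw

theorem norm_coeff_one_le_one (hc : Summable fun n => ‖c n‖)
    (hle : ∀ w ∈ ball (0 : ℂ) 1, ‖ofScalarsSum c w‖ ≤ 1) (h0 : c 0 = 0) : ‖c 1‖ ≤ 1 := by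
  rw [← deriv_ofScalarsSum_zero hc]
  exact norm_deriv_le_one_of_mapsTo_ball (differentiableOn_ofScalarsSum hc)
    (mapsTo_ofScalarsSum_closedBall hle h0) one_pos

theorem ofScalarsSum_single_one (a w : ℂ) : ofScalarsSum (E := ℂ) (Pi.single 1 a) w = w * a := by
  simp only [ofScalarsSum_eq_tsum, smul_eq_mul]
  rw [tsum_eq_single 1 fun n hn => by simp [hn]]
  simp [mul_comm]

/-- Equality case of the Schwarz lemma, read off on Taylor coefficients. -/
theorem coeff_eq_zero_of_one_le_norm_coeff_one (hc : Summable fun n => ‖c n‖)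
    (hle : ∀ w ∈ ball (0 : ℂ) 1, ‖ofScalarsSum c w‖ ≤ 1) (h0 : c 0 = 0) (h1 : 1 ≤ ‖c 1‖)
    {n : ℕ} (hn : n ≠ 1) : c n = 0 := by
  have hslope : ‖dslope (ofScalarsSum (E := ℂ) c) 0 0‖ = 1 / 1 := by
    rw [dslope_same, deriv_ofScalarsSum_zero hc, div_one]
    exact le_antisymm (norm_coeff_one_le_one hc hle h0) h1
  have hlin := Complex.affine_of_mapsTo_ball_of_norm_dslope_eq_div
    (differentiableOn_ofScalarsSum hc)
    (mapsTo_ofScalarsSum_closedBall hle h0) (mem_ball_self one_pos) hslope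
  have hcoeff : c = Pi.single 1 (c 1) := by
    refine eq_of_eqOn_ofScalarsSum hc ?_ fun w hw => ?_
    · exact summable_of_ne_finset_zero (s := {1}) fun n hn => by simp_all
    · rw [hlin hw, ofScalarsSum_single_one, dslope_same, deriv_ofScalarsSum_zero hc,
        ofScalarsSum_zero, h0]
      simp
  rw [hcoeff, Pi.single_apply, if_neg hn]

end OneVariable

section LeftInverse

variable {f : ℂ → ℂ} {g : ℕ → ℂ → ℂ}

theorem eqOn_pow_of_pow_eq_comp (hf : DifferentiableOn ℂ f (ball 0 1)) (hf0 : f 0 = 0)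
    (hg : ∀ m, DifferentiableOn ℂ (g m) (ball 0 1))
    (hgf : ∀ m, ∀ w ∈ ball (0 : ℂ) 1, g m (f w) = w ^ m) (m : ℕ) :
    EqOn (g m) (g 1 ^ m) (ball 0 1) := by
  have hg0 : g 1 0 = 0 := by simpa [hf0] using hgf 1 0 (mem_ball_self one_pos)
  have hball : ∀ᶠ w in 𝓝[≠] (0 : ℂ), w ∈ ball (0 : ℂ) 1 :=
    nhdsWithin_le_nhds (ball_mem_nhds 0 one_pos)
  have hne : ∀ᶠ w in 𝓝[≠] (0 : ℂ), f w ≠ 0 := by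
    filter_upwards [hball, self_mem_nhdsWithin] with w hw hw0 hfw
    exact hw0 (by simpa [hfw, hg0] using (hgf 1 w hw).symm)
  have htends : Tendsto f (𝓝[≠] 0) (𝓝[≠] 0) := by
    refine tendsto_nhdsWithin_of_tendsto_nhds_of_eventually_within _ ?_ hne
    have hcont := (hf.continuousOn.continuousAt (ball_mem_nhds 0 one_pos)).tendsto
    rw [hf0] at hcont
    exact hcont.mono_left nhdsWithin_le_nhds
  have hfreq : ∃ᶠ ζ in 𝓝[≠] (0 : ℂ), g m ζ = (g 1 ^ m) ζ := by
    refine htends.frequently (Eventually.frequently ?_)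
    filter_upwards [hball] with w hw
    simp [hgf m w hw, hgf 1 w hw]
  exact ((hg m).analyticOnNhd isOpen_ball).eqOn_of_preconnected_of_frequently_eq
    (((hg 1).analyticOnNhd isOpen_ball).pow m) (convex_ball 0 1).isPreconnected
    (mem_ball_self one_pos) hfreq

/-- `g m = g 1 ^ m` bounds `‖g 1‖` by `1`; then Schwarz for `g 1` and the chain rule for
`g 1 ∘ f = id` give the claim. -/
theorem one_le_norm_deriv_of_pow_eq_comp {C : ℝ} (hf : DifferentiableOn ℂ f (ball 0 1))
    (hf0 : f 0 = 0)
    (hg : ∀ m, DifferentiableOn ℂ (g m) (ball 0 1)) (hC : ∀ m, ∀ ζ ∈ ball (0 : ℂ) 1, ‖g m ζ‖ ≤ C)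
    (hgf : ∀ m, ∀ w ∈ ball (0 : ℂ) 1, g m (f w) = w ^ m) : 1 ≤ ‖deriv f 0‖ := by
  have hg0 : g 1 0 = 0 := by simpa [hf0] using hgf 1 0 (mem_ball_self one_pos)
  have hle : MapsTo (g 1) (ball 0 1) (closedBall (g 1 0) 1) := by
    intro ζ hζ
    rw [hg0, mem_closedBall_zero_iff]
    by_contra! hgt
    obtain ⟨m, hm⟩ := pow_unbounded_of_one_lt C hgt
    have := hC m ζ hζ
    rw [eqOn_pow_of_pow_eq_comp hf hf0 hg hgf m hζ, Pi.pow_apply, norm_pow] at this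
    linarith
  have hcomp : deriv (g 1 ∘ f) 0 = 1 := by
    refine ((hasDerivAt_id 0).congr_of_eventuallyEq ?_).deriv
    filter_upwards [ball_mem_nhds 0 one_pos] with w hw
    simpa using hgf 1 w hw
  have hchain : deriv (g 1 ∘ f) 0 = deriv (g 1) 0 * deriv f 0 := by
    rw [deriv_comp 0 (by rw [hf0]; exact (hg 1).differentiableAt (ball_mem_nhds 0 one_pos))
      (hf.differentiableAt (ball_mem_nhds 0 one_pos)), hf0]
  calc 1 = ‖deriv (g 1) 0‖ * ‖deriv f 0‖ := by rw [← norm_mul, ← hchain, hcomp, norm_one]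
    _ ≤ 1 * ‖deriv f 0‖ := by
        gcongr; exact norm_deriv_le_one_of_mapsTo_ball (hg 1) hle one_pos
    _ = ‖deriv f 0‖ := one_mul _

end LeftInverse

theorem summable_norm_fiberSum {I : Type*} {u : I → ℂ} (hu : Summable fun i => ‖u i‖)
    (g : I → ℕ) : Summable fun n => ‖∑' i : g ⁻¹' {n}, u i‖ :=
  (hu.hasSum.tsum_fiberwise g).summable.of_nonneg_of_le (fun _ => norm_nonneg _)
    fun _ => norm_tsum_le_tsum_norm (hu.subtype _)

theorem tsum_mul_pow_eq_ofScalarsSum {I : Type*} {u : I → ℂ} (hu : Summable fun i => ‖u i‖)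
    (g : I → ℕ) {w : ℂ} (hw : ‖w‖ ≤ 1) :
    ∑' i, u i * w ^ g i = ofScalarsSum (fun n => ∑' i : g ⁻¹' {n}, u i) w := by
  have hs : Summable fun i => u i * w ^ g i := .of_norm <| hu.of_nonneg_of_le
    (fun _ => norm_nonneg _) fun i => by
      simpa [norm_mul, norm_pow] using
        mul_le_of_le_one_right (norm_nonneg (u i)) (pow_le_one₀ (norm_nonneg w) hw)
  rw [ofScalarsSum_eq_tsum, ← (hs.hasSum.tsum_fiberwise g).tsum_eq]
  refine tsum_congr fun n => ?_
  rw [smul_eq_mul, ← tsum_mul_right]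
  exact tsum_congr fun i => by rw [i.2]

theorem degree_eq_apply_add_degree_erase (k : ℕ) (α : ℕ →₀ ℕ) :
    degree α = α k + degree (α.erase k) := by
  conv_lhs => rw [← single_add_erase k α]
  rw [map_add, degree_single]

theorem eq_single_of_degree_eq_one {α : ℕ →₀ ℕ} {k : ℕ} (hα : degree α = 1) (hk : α k ≠ 0) :
    α = single k 1 := by
  have h := degree_eq_apply_add_degree_erase k α
  have herase : α.erase k = 0 := (degree_eq_zero_iff _).1 (by omega)
  rw [← single_add_erase k α, herase, add_zero, show α k = 1 by omega]

theorem Nat.ofDigits_map_range (B : ℕ) (f : ℕ → ℕ) (N : ℕ) :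
    Nat.ofDigits B ((List.range N).map f) = ∑ i ∈ Finset.range N, f i * B ^ i := by
  induction N with
  | zero => simp
  | succ N ih =>
    rw [List.range_succ, List.map_append, Nat.ofDigits_append, ih, Finset.sum_range_succ]
    simp [mul_comm]

theorem eq_of_weight_pow_eq {B : ℕ} (hB : 1 < B) {α β : ℕ →₀ ℕ} (hα : ∀ j, α j < B)
    (hβ : ∀ j, β j < B) (h : weight (B ^ ·) α = weight (B ^ ·) β) : α = β := by
  obtain ⟨N, hN⟩ := Finset.exists_nat_subset_range (α.support ∪ β.support)
  have hdigits : ∀ γ : ℕ →₀ ℕ, γ.support ⊆ Finset.range N →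
      weight (B ^ ·) γ = Nat.ofDigits B ((List.range N).map γ) := by
    intro γ hγ
    rw [weight_apply, Finsupp.sum_of_support_subset γ hγ _ (by simp), Nat.ofDigits_map_range]
    simp
  have hlist := Nat.ofDigits_inj_of_len_eq (L1 := (List.range N).map α)
    (L2 := (List.range N).map β) hB (by simp) (by simp [hα]) (by simp [hβ])
    (by rw [← hdigits α (Finset.union_subset_left hN), ← hdigits β (Finset.union_subset_right hN),
      h])
  ext j
  by_cases hj : j < N
  · exact List.map_inj_left.1 hlist j (List.mem_range.2 hj)
  · have hjN : j ∉ α.support ∪ β.support := fun h => hj (Finset.mem_range.1 (hN h))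
    simp only [Finset.mem_union, mem_support_iff, not_or, not_not] at hjN
    rw [hjN.1, hjN.2]

theorem monomial_single (z : ℕ → ℂ) (k m : ℕ) : monomial z (single k m) = z k ^ m :=
  prod_single_index (pow_zero _)

theorem monomial_smul (w : ℂ) (q : ℕ → ℂ) (α : ℕ →₀ ℕ) :
    monomial (w • q) α = w ^ degree α * monomial q α := by
  simp only [monomial, Finsupp.prod, degree_apply, Pi.smul_apply, smul_eq_mul, mul_pow,
    Finset.prod_mul_distrib, Finset.prod_pow_eq_pow_sum]

theorem monomial_pow_eq_pow_weight (v : ℂ) (W : ℕ → ℕ) (α : ℕ →₀ ℕ) :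
    monomial (fun j => v ^ W j) α = v ^ weight W α := by
  simp only [monomial, Finsupp.prod, weight_apply, Finsupp.sum, smul_eq_mul, ← pow_mul,
    Finset.prod_pow_eq_pow_sum, mul_comm]

theorem norm_monomial_le_one {z : ℕ → ℂ} (hz : ∀ j, ‖z j‖ ≤ 1) (α : ℕ →₀ ℕ) :
    ‖monomial z α‖ ≤ 1 := by
  rw [monomial, Finsupp.prod, norm_prod]
  exact Finset.prod_le_one (fun _ _ => norm_nonneg _) fun j _ => by
    rw [norm_pow]; exact pow_le_one₀ (norm_nonneg _) (hz j)

theorem monomial_eq_zero {z : ℕ → ℂ} {α : ℕ →₀ ℕ} {j : ℕ} (hz : z j = 0) (hα : α j ≠ 0) :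
    monomial z α = 0 :=
  Finset.prod_eq_zero (mem_support_iff.2 hα) (by simp [hz, hα])

theorem summable_norm_mul_monomial {u : (ℕ →₀ ℕ) → ℂ} (hu : Summable fun α => ‖u α‖)
    {z : ℕ → ℂ} (hz : ∀ j, ‖z j‖ ≤ 1) : Summable fun α => ‖u α * monomial z α‖ :=
  hu.of_nonneg_of_le (fun _ => norm_nonneg _) fun α => by
    rw [norm_mul]; exact mul_le_of_le_one_right (norm_nonneg _) (norm_monomial_le_one hz α)

theorem norm_tsum_mul_monomial_le {u : (ℕ →₀ ℕ) → ℂ} (hu : Summable fun α => ‖u α‖)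
    {z : ℕ → ℂ} (hz : ∀ j, ‖z j‖ ≤ 1) : ‖∑' α, u α * monomial z α‖ ≤ ∑' α, ‖u α‖ :=
  (norm_tsum_le_tsum_norm (summable_norm_mul_monomial hu hz)).trans <|
    (summable_norm_mul_monomial hu hz).tsum_le_tsum (fun α => by
      rw [norm_mul]; exact mul_le_of_le_one_right (norm_nonneg _) (norm_monomial_le_one hz α)) hu

theorem smul_mem_ballB {q : ℕ → ℂ} (hq : ∀ j, ‖q j‖ ≤ 1) (hq0 : Tendsto q atTop (𝓝 0)) {w : ℂ}
    (hw : ‖w‖ < 1) : w • q ∈ ballB := by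
  refine ⟨fun j => ?_, by simpa using hq0.const_smul w⟩
  rw [Pi.smul_apply, norm_smul]
  exact (mul_le_of_le_one_right (norm_nonneg w) (hq j)).trans_lt hw

theorem norm_single_one_le_one (k j : ℕ) : ‖(Pi.single k 1 : ℕ → ℂ) j‖ ≤ 1 := by
  by_cases hj : j = k <;> simp [hj]

theorem tendsto_single_one (k : ℕ) : Tendsto (Pi.single k 1 : ℕ → ℂ) atTop (𝓝 0) :=
  tendsto_const_nhds.congr' <| (eventually_ne_atTop k).mono fun j hj => by simp [hj]

/-- `homogeneousComponent u · q` are the Taylor coefficients of `w ↦ ∑ u α (w • q) ^ α`. -/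
def homogeneousComponent (u : (ℕ →₀ ℕ) → ℂ) (n : ℕ) (q : ℕ → ℂ) : ℂ :=
  ∑' α : (degree : (ℕ →₀ ℕ) → ℕ) ⁻¹' {n}, u α * monomial q α

section HomogeneousComponent

variable {u : (ℕ →₀ ℕ) → ℂ} {q : ℕ → ℂ}

theorem summable_norm_homogeneousComponent (hu : Summable fun α => ‖u α‖)
    (hq : ∀ j, ‖q j‖ ≤ 1) : Summable fun n => ‖homogeneousComponent u n q‖ :=
  summable_norm_fiberSum (summable_norm_mul_monomial hu hq) _

theorem tsum_mul_monomial_smul (hu : Summable fun α => ‖u α‖) (hq : ∀ j, ‖q j‖ ≤ 1) {w : ℂ}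
    (hw : ‖w‖ ≤ 1) :
    ∑' α, u α * monomial (w • q) α = ofScalarsSum (homogeneousComponent u · q) w := by
  refine (tsum_congr fun α => ?_).trans
    (tsum_mul_pow_eq_ofScalarsSum (summable_norm_mul_monomial hu hq) degree hw)
  rw [monomial_smul]; ring

theorem homogeneousComponent_zero (u : (ℕ →₀ ℕ) → ℂ) (q : ℕ → ℂ) :
    homogeneousComponent u 0 q = u 0 := by
  rw [homogeneousComponent, tsum_eq_single ⟨0, by simp⟩ fun α hα =>
    (hα (Subtype.ext ((degree_eq_zero_iff _).1 α.2))).elim]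
  simp [monomial]

theorem homogeneousComponent_one {k : ℕ} (hu : ∀ α, u α ≠ 0 → α k ≠ 0) (hqk : q k = 1) :
    homogeneousComponent u 1 q = u (single k 1) := by
  rw [homogeneousComponent, tsum_eq_single ⟨single k 1, by simp⟩ fun α hα => ?_]
  · simp [monomial_single, hqk]
  · by_contra h
    exact hα (Subtype.ext (eq_single_of_degree_eq_one α.2 (hu α (left_ne_zero_of_mul h))))

end HomogeneousComponent

/-- Weights `B ^ j` off `k` and `0` at `k`: substituting `z_j = v ^ kroneckerWeight k B j` keeps
`z_k = 1` and, by uniqueness of base-`B` digits, separates multi-indices with entries `< B`. -/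
def kroneckerWeight (k B : ℕ) : ℕ → ℕ := Function.update (B ^ ·) k 0

theorem weight_kroneckerWeight (k B : ℕ) (α : ℕ →₀ ℕ) :
    weight (kroneckerWeight k B) α = weight (B ^ ·) (α.erase k) := by
  conv_lhs => rw [← single_add_erase k α]
  rw [map_add, weight_single, kroneckerWeight, Function.update_self, smul_zero, zero_add,
    weight_apply, weight_apply]
  refine Finsupp.sum_congr fun j hj => ?_
  have hjk : j ≠ k := by rintro rfl; simp at hj
  rw [Function.update_of_ne hjk]

theorem injOn_weight_kroneckerWeight (k n : ℕ) :
    InjOn (weight (kroneckerWeight k (n + 2))) ((degree : (ℕ →₀ ℕ) → ℕ) ⁻¹' {n}) := by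
  intro α hα β hβ h
  have hlt : ∀ γ : ℕ →₀ ℕ, degree γ = n → ∀ j, γ.erase k j < n + 2 := fun γ hγ j => by
    have := hγ ▸ le_degree j γ
    rw [erase_apply]
    split_ifs <;> omega
  rw [weight_kroneckerWeight, weight_kroneckerWeight] at h
  have herase := eq_of_weight_pow_eq (by omega) (hlt α hα) (hlt β hβ) h
  have hk : α k = β k := by
    have hdα := degree_eq_apply_add_degree_erase k α
    have hdβ := degree_eq_apply_add_degree_erase k β
    simp only [mem_preimage, mem_singleton_iff] at hα hβ
    rw [herase] at hdα
    omega
  rw [← single_add_erase k α, ← single_add_erase k β, hk, herase]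

theorem eq_zero_of_homogeneousComponent_kronecker_eq_zero {u : (ℕ →₀ ℕ) → ℂ}
    (hu : Summable fun α => ‖u α‖) {k n : ℕ}
    (h : ∀ v ∈ ball (0 : ℂ) 1,
      homogeneousComponent u n (fun j => v ^ kroneckerWeight k (n + 2) j) = 0)
    {α : ℕ →₀ ℕ} (hα : degree α = n) : u α = 0 := by
  set H : (degree : (ℕ →₀ ℕ) → ℕ) ⁻¹' {n} → ℕ := fun β =>
    weight (kroneckerWeight k (n + 2)) (β : ℕ →₀ ℕ)
  have hsum : Summable fun β : (degree : (ℕ →₀ ℕ) → ℕ) ⁻¹' {n} => ‖u β‖ := hu.subtype _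
  have hfiber : (fun m => ∑' β : H ⁻¹' {m}, u β) = 0 := by
    refine eq_of_eqOn_ofScalarsSum (summable_norm_fiberSum hsum H) (by simp) fun v hv => ?_
    rw [← tsum_mul_pow_eq_ofScalarsSum hsum H (mem_ball_zero_iff.1 hv).le]
    simp only [ofScalarsSum_eq_tsum, Pi.zero_apply, zero_smul, tsum_zero]
    rw [← h v hv, homogeneousComponent]
    simp only [H, monomial_pow_eq_pow_weight]
  have hα' := congrFun hfiber (H ⟨α, hα⟩)
  rwa [tsum_eq_single (⟨⟨α, hα⟩, rfl⟩ : H ⁻¹' {H ⟨α, hα⟩}) fun β hβ =>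
    (hβ (Subtype.ext (Subtype.ext
      (injOn_weight_kroneckerWeight k n β.1.2 (show α ∈ _ from hα) β.2)))).elim,
    Pi.zero_apply] at hα'

theorem tendsto_pow_kroneckerWeight {v : ℂ} (hv : ‖v‖ < 1) (k : ℕ) {B : ℕ} (hB : 1 < B) :
    Tendsto (fun j => v ^ kroneckerWeight k B j) atTop (𝓝 0) := by
  refine ((tendsto_pow_atTop_nhds_zero_of_norm_lt_one hv).comp
    (tendsto_pow_atTop_atTop_of_one_lt hB)).congr' ?_
  filter_upwards [eventually_ne_atTop k] with j hj
  simp [kroneckerWeight, Function.update_of_ne hj]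

section Rigidity

variable {u : (ℕ →₀ ℕ) → ℂ} {k : ℕ}

theorem norm_ofScalarsSum_homogeneousComponent_le (hu : Summable fun α => ‖u α‖)
    (hle : ∀ z ∈ ballB, ‖∑' α, u α * monomial z α‖ ≤ 1) {q : ℕ → ℂ} (hq : ∀ j, ‖q j‖ ≤ 1)
    (hq0 : Tendsto q atTop (𝓝 0)) {w : ℂ} (hw : w ∈ ball (0 : ℂ) 1) :
    ‖ofScalarsSum (homogeneousComponent u · q) w‖ ≤ 1 := by
  rw [mem_ball_zero_iff] at hw
  rw [← tsum_mul_monomial_smul hu hq hw.le]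
  exact hle _ (smul_mem_ballB hq hq0 hw)

theorem norm_apply_single_le_one (hu : Summable fun α => ‖u α‖)
    (hle : ∀ z ∈ ballB, ‖∑' α, u α * monomial z α‖ ≤ 1) (hvan : ∀ α, u α ≠ 0 → α k ≠ 0) :
    ‖u (single k 1)‖ ≤ 1 := by
  have hq := norm_single_one_le_one k
  rw [← homogeneousComponent_one hvan (Pi.single_eq_same k 1)]
  refine norm_coeff_one_le_one (summable_norm_homogeneousComponent hu hq) (fun w hw =>
    norm_ofScalarsSum_homogeneousComponent_le hu hle hq (tendsto_single_one k) hw) ?_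
  rw [homogeneousComponent_zero]
  exact of_not_not fun h => hvan 0 h rfl

theorem homogeneousComponent_eq_zero (hu : Summable fun α => ‖u α‖)
    (hle : ∀ z ∈ ballB, ‖∑' α, u α * monomial z α‖ ≤ 1) (hvan : ∀ α, u α ≠ 0 → α k ≠ 0)
    (h1 : 1 ≤ ‖u (single k 1)‖) {q : ℕ → ℂ} (hq : ∀ j, ‖q j‖ ≤ 1)
    (hq0 : Tendsto q atTop (𝓝 0)) (hqk : q k = 1) {n : ℕ} (hn : n ≠ 1) :
    homogeneousComponent u n q = 0 := by
  refine coeff_eq_zero_of_one_le_norm_coeff_one (summable_norm_homogeneousComponent hu hq)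
    (fun w hw => norm_ofScalarsSum_homogeneousComponent_le hu hle hq hq0 hw) ?_
    (by rwa [homogeneousComponent_one hvan hqk]) hn
  rw [homogeneousComponent_zero]
  exact of_not_not fun h => hvan 0 h rfl

theorem eq_zero_of_ne_single (hu : Summable fun α => ‖u α‖)
    (hle : ∀ z ∈ ballB, ‖∑' α, u α * monomial z α‖ ≤ 1) (hvan : ∀ α, u α ≠ 0 → α k ≠ 0)
    (h1 : 1 ≤ ‖u (single k 1)‖) {α : ℕ →₀ ℕ} (hα : α ≠ single k 1) : u α = 0 := by
  by_contra h
  have hn : degree α ≠ 1 := fun hdeg => hα (eq_single_of_degree_eq_one hdeg (hvan α h))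
  refine h (eq_zero_of_homogeneousComponent_kronecker_eq_zero (k := k) hu (fun v hv => ?_) rfl)
  rw [mem_ball_zero_iff] at hv
  refine homogeneousComponent_eq_zero hu hle hvan h1 (fun j => ?_)
    (tendsto_pow_kroneckerWeight hv k (by omega)) (by simp [kroneckerWeight]) hn
  rw [norm_pow]
  exact pow_le_one₀ (norm_nonneg v) hv.le

end Rigidity

namespace CoeffInf

theorem summable_norm (a : CoeffInf) : Summable fun α => ‖a α‖ := by
  simpa using a.2.summable

theorem tsum_norm (a : CoeffInf) : ∑' α, ‖a α‖ = ‖a‖ := by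
  rw [lp.norm_eq_tsum_rpow (by norm_num) a]
  simp

theorem tsum_single_mul_monomial (β : ℕ →₀ ℕ) (z : ℕ → ℂ) :
    ∑' α, (lp.single 1 β (1 : ℂ) : CoeffInf) α * monomial z α = monomial z β := by
  rw [tsum_eq_single β fun α hα => by rw [lp.single_apply_ne 1 β _ hα, zero_mul],
    lp.single_apply_self, one_mul]

end CoeffInf

def IsCompositionOperator (φ : (ℕ → ℂ) → ℕ → ℂ) (T : CoeffInf →L[ℂ] CoeffInf) : Prop :=
  ∀ a : CoeffInf, ∀ z ∈ ballB, ∑' α, T a α * monomial z α = ∑' α, a α * monomial (φ z) α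

namespace IsCompositionOperator

variable {φ : (ℕ → ℂ) → ℕ → ℂ} {T : CoeffInf →L[ℂ] CoeffInf}

theorem apply_eq_tsum (hT : IsCompositionOperator φ T) {z : ℕ → ℂ} (hz : z ∈ ballB) (k : ℕ) :
    φ z k = ∑' α, T (lp.single 1 (single k 1) 1) α * monomial z α := by
  rw [hT _ z hz, CoeffInf.tsum_single_mul_monomial, monomial_single, pow_one]

theorem apply_eq_zero (hT : IsCompositionOperator φ T) {j : ℕ}
    (hvan : ∀ α, T (lp.single 1 (single j 1) 1) α ≠ 0 → α j ≠ 0) {z : ℕ → ℂ} (hz : z ∈ ballB)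
    (hzj : z j = 0) : φ z j = 0 := by
  rw [hT.apply_eq_tsum hz j]
  refine (tsum_congr fun α => ?_).trans tsum_zero
  by_cases h : T (lp.single 1 (single j 1) 1) α = 0
  · rw [h, zero_mul]
  · rw [monomial_eq_zero hzj (hvan α h), mul_zero]

theorem apply_smul_single (hT : IsCompositionOperator φ T)
    (hvan : ∀ j α, T (lp.single 1 (single j 1) 1) α ≠ 0 → α j ≠ 0) {k : ℕ} {w : ℂ}
    (hw : ‖w‖ < 1) : φ (w • Pi.single k 1) = φ (w • Pi.single k 1) k • Pi.single k 1 := by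
  ext j
  by_cases hj : j = k
  · subst hj; simp
  · rw [hT.apply_eq_zero (hvan j)
      (smul_mem_ballB (norm_single_one_le_one k) (tendsto_single_one k) hw) (by simp [hj])]
    simp [hj]

/-- With `T a_m = z_k ^ m` and `‖a_m‖ ≤ C` (open mapping theorem), the restrictions of `a_m` to the
axis are the `g m` of `one_le_norm_deriv_of_pow_eq_comp`, since `φ` preserves the axis. -/
theorem one_le_norm_apply_single (hT : IsCompositionOperator φ T)
    (hmaps : ∀ z ∈ ballB, φ z ∈ ballB) (hsurj : Function.Surjective T)
    (hvan : ∀ j α, T (lp.single 1 (single j 1) 1) α ≠ 0 → α j ≠ 0) (k : ℕ) :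
    1 ≤ ‖T (lp.single 1 (single k 1) 1) (single k 1)‖ := by
  have he := norm_single_one_le_one k
  have hsum (a : CoeffInf) :=
    summable_norm_homogeneousComponent (CoeffInf.summable_norm a) he
  have hline (a : CoeffInf) {ζ : ℂ} (hζ : ‖ζ‖ ≤ 1) :
      ofScalarsSum (homogeneousComponent a · (Pi.single k 1)) ζ
        = ∑' α, a α * monomial (ζ • Pi.single k 1) α :=
    (tsum_mul_monomial_smul (CoeffInf.summable_norm a) he hζ).symm
  have hmem {w : ℂ} (hw : w ∈ ball (0 : ℂ) 1) : w • Pi.single k 1 ∈ ballB :=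
    smul_mem_ballB he (tendsto_single_one k) (mem_ball_zero_iff.1 hw)
  have hf {w : ℂ} (hw : w ∈ ball (0 : ℂ) 1) :
      ofScalarsSum (homogeneousComponent (T (lp.single 1 (single k 1) 1)) · (Pi.single k 1)) w
        = φ (w • Pi.single k 1) k := by
    rw [hline _ (mem_ball_zero_iff.1 hw).le, hT.apply_eq_tsum (hmem hw)]
  obtain ⟨C, -, hC⟩ := ContinuousLinearMap.exists_preimage_norm_le T hsurj
  choose a haT haC using fun m => hC (lp.single 1 (single k m) 1)
  rw [← homogeneousComponent_one (q := Pi.single k 1) (hvan k) (by simp),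
    ← deriv_ofScalarsSum_zero (hsum _)]
  refine one_le_norm_deriv_of_pow_eq_comp (C := C) (differentiableOn_ofScalarsSum (hsum _)) ?_
    (fun m => differentiableOn_ofScalarsSum (hsum (a m))) (fun m ζ hζ => ?_) (fun m w hw => ?_)
  · rw [ofScalarsSum_zero, homogeneousComponent_zero, smul_eq_mul, mul_one]
    exact of_not_not fun h => hvan k 0 h rfl
  · rw [hline _ (mem_ball_zero_iff.1 hζ).le]
    refine (norm_tsum_mul_monomial_le (CoeffInf.summable_norm _)
      fun j => ((hmem hζ).1 j).le).trans ?_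
    simpa [CoeffInf.tsum_norm, lp.norm_single] using haC m
  · have hfw : ‖φ (w • Pi.single k 1) k‖ ≤ 1 := ((hmaps _ (hmem hw)).1 k).le
    rw [hf hw, hline _ hfw, ← hT.apply_smul_single hvan (mem_ball_zero_iff.1 hw),
      ← hT (a m) _ (hmem hw), haT m, CoeffInf.tsum_single_mul_monomial, monomial_single]
    simp

end IsCompositionOperator

/-- Theorem 3.4 (b).  Let `φ = (φ_j) : 𝐁 → 𝐁` be an analytic map such
that `C_φ` maps `A⁺(𝕋^∞)` into itself (`T` is `C_φ` read through coefficient families),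
and suppose `C_φ` is an automorphism of `A⁺(𝕋^∞)`.  Assume moreover that for each `k`
one has `φ_k(z) = z_k^{d_k} u_k(z)` with `d_k ≥ 1` and `u_k` analytic, `u_k(0) ≠ 0`;
in terms of the coefficient family `T(δ_{e_k})` of `φ_k`, this says that every
multi-index in the spectrum of `φ_k` has `k`-th entry `≥ d_k`, and the coefficient of
`z_k^{d_k}` is nonzero.  Then `φ(z) = (ε_j z_j)_j` for some unimodular `ε_j`. -/
theorem statement_11 (φ : (ℕ → ℂ) → (ℕ → ℂ))
    (hmaps : ∀ z ∈ ballB, φ z ∈ ballB)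
    (T : CoeffInf →L[ℂ] CoeffInf)
    (hT : ∀ (a : CoeffInf), ∀ z ∈ ballB,
      ∑' α : ℕ →₀ ℕ, (T a) α * monomial z α
        = ∑' α : ℕ →₀ ℕ, a α * monomial (φ z) α)
    (hbij : Function.Bijective T)
    (hfact : ∀ k : ℕ, ∃ d : ℕ, 1 ≤ d ∧
      (∀ α : ℕ →₀ ℕ,
        (T (lp.single 1 (Finsupp.single k 1) (1 : ℂ))) α ≠ 0 → d ≤ α k) ∧
      (T (lp.single 1 (Finsupp.single k 1) (1 : ℂ))) (Finsupp.single k d) ≠ 0) :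
    ∃ ε : ℕ → ℂ, (∀ j, ‖ε j‖ = 1) ∧
      ∀ z ∈ ballB, ∀ j, φ z j = ε j * z j := by
  have hT : IsCompositionOperator φ T := hT
  have hvan : ∀ k α, T (lp.single 1 (single k 1) 1) α ≠ 0 → α k ≠ 0 := fun k α hα => by
    obtain ⟨d, hd, hdle, -⟩ := hfact k
    exact Nat.one_le_iff_ne_zero.1 (hd.trans (hdle α hα))
  have hle : ∀ k, ∀ z ∈ ballB, ‖∑' α, T (lp.single 1 (single k 1) 1) α * monomial z α‖ ≤ 1 :=
    fun k z hz => by rw [← hT.apply_eq_tsum hz]; exact ((hmaps z hz).1 k).le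
  have hone : ∀ k, 1 ≤ ‖T (lp.single 1 (single k 1) 1) (single k 1)‖ :=
    hT.one_le_norm_apply_single hmaps hbij.2 hvan
  refine ⟨fun k => T (lp.single 1 (single k 1) 1) (single k 1), fun k => le_antisymm
    (norm_apply_single_le_one (CoeffInf.summable_norm _) (hle k) (hvan k)) (hone k),
    fun z hz k => ?_⟩
  rw [hT.apply_eq_tsum hz, tsum_eq_single (single k 1) fun α hα => by
    rw [eq_zero_of_ne_single (CoeffInf.summable_norm _) (hle k) (hvan k) (hone k) hα, zero_mul],
    monomial_single, pow_one]
end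
end

section
/- Let φ = (φ₁,…,φ_k) : 𝔻^k → 𝔻̄^k be an analytic map inducing a composition operator C_φ : A⁺(𝕋^k) → A⁺(𝕋^k). Then C_φ is an isometry (‖f∘φ‖_{A⁺(𝕋^k)} = ‖f‖_{A⁺(𝕋^k)} for every f ∈ A⁺(𝕋^k)) if and only if there exist a k×k matrix A = (a_{ij}) with entries a_{ij} ∈ ℕ₀ and det A ≠ 0, and complex numbers ε₁,…,ε_k of modulus 1, such that φ_i(z) = ε_i z₁^{a_{i1}}⋯z_k^{a_{ik}} for 1 ≤ i ≤ k and all z ∈ 𝔻^k. -/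
open Complex Filter
open scoped ENNReal

noncomputable section

/-- The Banach space `ℓ¹(ℕ₀^k)` of Taylor coefficient families, modelling the Wiener
algebra `A⁺(𝕋^k)`; the `A⁺(𝕋^k)`-norm is the `ℓ¹`-norm. -/
abbrev Coeffk (k : ℕ) := lp (fun _ : Fin k → ℕ => ℂ) 1

/-!
Write `g_α` (`monomialImage T α`) for the Taylor coefficients of `C_φ zᵅ = φᵅ`.
If `C_φ` is an isometry of `ℓ¹`, then `‖g_α ± g_α'‖₁ = 2 = ‖g_α‖₁ + ‖g_α'‖₁` forces the `g_α`
to have pairwise disjoint supports, and `g_{α+α'}` is the Cauchy product of `g_α` and `g_α'`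
with `‖g_{α+α'}‖₁ = 1 = ‖g_α‖₁ ‖g_α'‖₁`, so this product has no cancellation and
`supp g_{α+α'} ⊇ supp g_α + supp g_α'`. Hence the pairs `(α, β)` with `β ∈ supp g_α` form an
additive submonoid of `ℕᵏ × ℕᵏ` that is the graph of a function of `β`, and every integer
relation among the `β`s of such pairs also holds among the `α`s. Picking `Aᵢ ∈ supp g_{eᵢ}`,
this makes the rows of `A` independent, and since any `k + 1` vectors of `ℤᵏ` are dependent it
makes each `supp g_{eᵢ}` the single point `Aᵢ`; so `φᵢ = εᵢ z^{Aᵢ}` with `|εᵢ| = ‖g_{eᵢ}‖₁ = 1`.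
Conversely, such a `φ` sends `zᵅ` to `εᵅ z^{αA}`, and `α ↦ αA` is injective when
`det A ≠ 0`, so no two coefficients are merged and the `ℓ¹`-norm is preserved.
-/

namespace WienerAlgebra

section FiberSum

variable {β γ : Type*}

def fiberSum {E : Type*} [AddCommMonoid E] [TopologicalSpace E] (g : β → γ) (f : β → E)
    (c : γ) : E :=
  ∑' b : g ⁻¹' {c}, f b

theorem eq_of_hasSum_of_le {ι : Type*} {f g : ι → ℝ} {a : ℝ} (h : f ≤ g) (hf : HasSum f a)
    (hg : HasSum g a) : f = g := by
  by_contra hne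
  exact (hasSum_strict_mono hf hg (lt_of_le_of_ne h hne)).false

variable {E : Type*} [NormedAddCommGroup E] {g : β → γ} {f : β → E}

theorem hasSum_fiberSum [CompleteSpace E] {a : E} (hf : HasSum f a) (g : β → γ) :
    HasSum (fiberSum g f) a :=
  hf.tsum_fiberwise g

theorem norm_fiberSum_le (hf : Summable (‖f ·‖)) (c : γ) :
    ‖fiberSum g f c‖ ≤ fiberSum g (‖f ·‖) c :=
  norm_tsum_le_tsum_norm (hf.subtype _)

theorem summable_norm_fiberSum (hf : Summable (‖f ·‖)) : Summable (‖fiberSum g f ·‖) :=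
  (hasSum_fiberSum hf.hasSum g).summable.of_nonneg_of_le (fun _ => norm_nonneg _)
    (norm_fiberSum_le hf)

theorem fiberSum_apply_ne_zero (hf : Summable (‖f ·‖))
    (hmass : ∑' c, ‖fiberSum g f c‖ = ∑' b, ‖f b‖) {b : β} (hb : f b ≠ 0) :
    fiberSum g f (g b) ≠ 0 := by
  have hnorm : (‖fiberSum g f ·‖) = fiberSum g (‖f ·‖) :=
    eq_of_hasSum_of_le (norm_fiberSum_le hf)
      (hmass ▸ (summable_norm_fiberSum hf).hasSum) (hasSum_fiberSum hf.hasSum g)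
  rw [← norm_pos_iff, congrFun hnorm]
  exact (norm_pos_iff.mpr hb).trans_le
    ((hf.subtype (g ⁻¹' {g b})).le_tsum ⟨b, rfl⟩ fun _ _ => norm_nonneg _)

theorem fiberSum_apply_of_injective (hg : g.Injective) (b : β) : fiberSum g f (g b) = f b :=
  have : Subsingleton (g ⁻¹' {g b}) := ⟨fun x y => Subtype.ext (hg (x.2.trans y.2.symm))⟩
  tsum_eq_single (f := fun x : g ⁻¹' {g b} => f x) ⟨b, rfl⟩
    (fun x hx => absurd (Subsingleton.elim x _) hx)

theorem fiberSum_apply_of_notMem_range {c : γ} (hc : c ∉ Set.range g) : fiberSum g f c = 0 :=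
  have : IsEmpty (g ⁻¹' {c}) := ⟨fun b => hc ⟨b, b.2⟩⟩
  tsum_empty

theorem norm_fiberSum_of_injective (hg : g.Injective) (c : γ) :
    ‖fiberSum g f c‖ = fiberSum g (‖f ·‖) c := by
  by_cases hc : c ∈ Set.range g
  · obtain ⟨b, rfl⟩ := hc
    rw [fiberSum_apply_of_injective hg, fiberSum_apply_of_injective hg]
  · rw [fiberSum_apply_of_notMem_range hc, fiberSum_apply_of_notMem_range hc, norm_zero]

theorem hasSum_fiberSum_mul {𝕜 : Type*} [NormedField 𝕜] [CompleteSpace 𝕜] {f : β → 𝕜}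
    {w : γ → 𝕜} (h : Summable fun b => f b * w (g b)) :
    HasSum (fun c => fiberSum g f c * w c) (∑' b, f b * w (g b)) := by
  have hfiber : fiberSum g (fun b => f b * w (g b)) = fun c => fiberSum g f c * w c := by
    ext c
    simp only [fiberSum, ← tsum_mul_right]
    exact tsum_congr fun b => by rw [b.2]
  exact hfiber ▸ hasSum_fiberSum h.hasSum g

end FiberSum

section PowerSeries

theorem norm_prod_pow_le_one {ι : Type*} [Fintype ι] {z : ι → ℂ} (hz : ∀ i, ‖z i‖ ≤ 1)
    (β : ι → ℕ) : ‖∏ i, z i ^ β i‖ ≤ 1 := by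
  rw [norm_prod]
  exact Finset.prod_le_one (fun _ _ => norm_nonneg _)
    fun i _ => norm_pow (z i) _ ▸ pow_le_one₀ (norm_nonneg _) (hz i)

theorem norm_mul_prod_pow_le {ι : Type*} [Fintype ι] {z : ι → ℂ} (hz : ∀ i, ‖z i‖ ≤ 1)
    (c : ℂ) (β : ι → ℕ) : ‖c * ∏ i, z i ^ β i‖ ≤ ‖c‖ := by
  simpa [norm_mul] using mul_le_of_le_one_right (norm_nonneg c) (norm_prod_pow_le_one hz β)

theorem summable_norm_mul_prod_pow {ι : Type*} [Fintype ι] {c : (ι → ℕ) → ℂ}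
    (hc : Summable (‖c ·‖)) {z : ι → ℂ} (hz : ∀ i, ‖z i‖ ≤ 1) :
    Summable fun β => ‖c β * ∏ i, z i ^ β i‖ :=
  hc.of_nonneg_of_le (fun _ => norm_nonneg _) fun β => norm_mul_prod_pow_le hz (c β) β

theorem norm_tsum_mul_prod_pow_le {ι : Type*} [Fintype ι] {c : (ι → ℕ) → ℂ}
    (hc : Summable (‖c ·‖)) {z : ι → ℂ} (hz : ∀ i, ‖z i‖ ≤ 1) :
    ‖∑' β, c β * ∏ i, z i ^ β i‖ ≤ ∑' β, ‖c β‖ :=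
  (norm_tsum_le_tsum_norm (summable_norm_mul_prod_pow hc hz)).trans
    ((summable_norm_mul_prod_pow hc hz).tsum_le_tsum (fun β => norm_mul_prod_pow_le hz _ β) hc)

theorem eq_zero_of_tsum_mul_pow_eq_zero {a : ℕ → ℂ} (ha : Summable (‖a ·‖))
    (h : ∀ z : ℂ, ‖z‖ < 1 → ∑' n, a n * z ^ n = 0) : a = 0 := by
  set p := FormalMultilinearSeries.ofScalars ℂ a
  have hradius : 1 ≤ p.radius := by
    simpa using p.le_radius_of_summable_norm (r := 1) (by simpa [p] using ha)
  have hzero : p.sum =ᶠ[nhds 0] 0 := by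
    filter_upwards [Metric.ball_mem_nhds (0 : ℂ) one_pos] with z hz
    change FormalMultilinearSeries.ofScalarsSum a z = 0
    simpa [FormalMultilinearSeries.ofScalars_sum_eq] using h z (by simpa using hz)
  have hp := ((p.hasFPowerSeriesOnBall (zero_lt_one.trans_le hradius)).hasFPowerSeriesAt
    ).eq_zero_of_eventually hzero
  exact (FormalMultilinearSeries.ofScalars_series_eq_zero ℂ).mp hp

theorem prod_cons_pow {k : ℕ} (z₀ : ℂ) (w : Fin k → ℂ) (n : ℕ) (β : Fin k → ℕ) :
    ∏ i, (Fin.cons z₀ w : Fin (k + 1) → ℂ) i ^ (Fin.cons n β : Fin (k + 1) → ℕ) i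
      = z₀ ^ n * ∏ i, w i ^ β i := by
  simp [Fin.prod_univ_succ]

theorem tsum_mul_prod_cons_pow {k : ℕ} {c : (Fin (k + 1) → ℕ) → ℂ} (hc : Summable (‖c ·‖))
    {z₀ : ℂ} {w : Fin k → ℂ} (hz₀ : ‖z₀‖ ≤ 1) (hw : ∀ i, ‖w i‖ ≤ 1) :
    ∑' β, c β * ∏ i, (Fin.cons z₀ w : Fin (k + 1) → ℂ) i ^ β i
      = ∑' m, (∑' β, c (Fin.cons m β) * ∏ i, w i ^ β i) * z₀ ^ m := by
  have hz : ∀ i, ‖(Fin.cons z₀ w : Fin (k + 1) → ℂ) i‖ ≤ 1 :=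
    Fin.forall_fin_succ.mpr ⟨by simpa using hz₀, by simpa using hw⟩
  have hsum : Summable fun p : ℕ × (Fin k → ℕ) =>
      c (Fin.cons p.1 p.2) * (z₀ ^ p.1 * ∏ i, w i ^ p.2 i) := by
    have := (Fin.consEquiv fun _ => ℕ).summable_iff.mpr (summable_norm_mul_prod_pow hc hz)
    simpa [Fin.consEquiv, prod_cons_pow] using this.of_norm
  calc ∑' β, c β * ∏ i, (Fin.cons z₀ w : Fin (k + 1) → ℂ) i ^ β i
      = ∑' p : ℕ × (Fin k → ℕ), c (Fin.cons p.1 p.2) * (z₀ ^ p.1 * ∏ i, w i ^ p.2 i) := by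
        rw [← (Fin.consEquiv fun _ => ℕ).tsum_eq]
        simp [Fin.consEquiv, prod_cons_pow]
    _ = ∑' m, ∑' β, c (Fin.cons m β) * (z₀ ^ m * ∏ i, w i ^ β i) := hsum.tsum_prod
    _ = ∑' m, (∑' β, c (Fin.cons m β) * ∏ i, w i ^ β i) * z₀ ^ m := by
        refine tsum_congr fun m => ?_
        rw [← tsum_mul_right]
        exact tsum_congr fun β => by ring

theorem eq_zero_of_tsum_mul_prod_pow_eq_zero : ∀ {k : ℕ} {c : (Fin k → ℕ) → ℂ},
    Summable (‖c ·‖) → (∀ z : Fin k → ℂ, (∀ i, ‖z i‖ < 1) →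
      ∑' β, c β * ∏ i, z i ^ β i = 0) → c = 0
  | 0, c, _, h => by
    funext β
    have h0 := h 0 finZeroElim
    rw [tsum_eq_single β fun b hb => absurd (Subsingleton.elim b β) hb] at h0
    simpa using h0
  | k + 1, c, hc, h => by
    have hc' : Summable fun p : ℕ × (Fin k → ℕ) => ‖c (Fin.cons p.1 p.2)‖ :=
      (Fin.consEquiv fun _ => ℕ).summable_iff.mpr hc
    suffices hslice : ∀ n, (fun β => c (Fin.cons n β)) = 0 by
      funext β
      simpa using congrFun (hslice (β 0)) (Fin.tail β)
    intro n
    refine eq_zero_of_tsum_mul_prod_pow_eq_zero (hc'.prod_factor n) fun w hw => ?_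
    have hw' : ∀ i, ‖w i‖ ≤ 1 := fun i => (hw i).le
    have hcoeff : (fun m => ∑' β, c (Fin.cons m β) * ∏ i, w i ^ β i) = 0 := by
      refine eq_zero_of_tsum_mul_pow_eq_zero ?_ fun z₀ hz₀ => ?_
      · exact hc'.prod.of_nonneg_of_le (fun _ => norm_nonneg _) fun m =>
          norm_tsum_mul_prod_pow_le (hc'.prod_factor m) hw'
      rw [← tsum_mul_prod_cons_pow hc hz₀.le hw']
      exact h _ (Fin.forall_fin_succ.mpr ⟨by simpa using hz₀, by simpa using hw⟩)
    exact congrFun hcoeff n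

theorem eq_of_tsum_mul_prod_pow_eq {k : ℕ} {c d : (Fin k → ℕ) → ℂ} (hc : Summable (‖c ·‖))
    (hd : Summable (‖d ·‖)) (h : ∀ z : Fin k → ℂ, (∀ i, ‖z i‖ < 1) →
      ∑' β, c β * ∏ i, z i ^ β i = ∑' β, d β * ∏ i, z i ^ β i) : c = d := by
  refine sub_eq_zero.mp (eq_zero_of_tsum_mul_prod_pow_eq_zero ?_ fun z hz => ?_)
  · exact (hc.add hd).of_nonneg_of_le (fun _ => norm_nonneg _) fun β => norm_sub_le _ _
  have hz' : ∀ i, ‖z i‖ ≤ 1 := fun i => (hz i).le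
  simp only [Pi.sub_apply, sub_mul]
  rw [(summable_norm_mul_prod_pow hc hz').of_norm.tsum_sub
    (summable_norm_mul_prod_pow hd hz').of_norm, h z hz, sub_self]

def cauchyProduct {ι : Type*} (x y : (ι → ℕ) → ℂ) : (ι → ℕ) → ℂ :=
  fiberSum (fun p : (ι → ℕ) × (ι → ℕ) => p.1 + p.2) fun p => x p.1 * y p.2

theorem tsum_mul_prod_pow_mul_tsum_mul_prod_pow {ι : Type*} [Fintype ι]
    {x y : (ι → ℕ) → ℂ} (hx : Summable (‖x ·‖)) (hy : Summable (‖y ·‖)) {z : ι → ℂ}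
    (hz : ∀ i, ‖z i‖ ≤ 1) :
    (∑' β, x β * ∏ i, z i ^ β i) * (∑' β, y β * ∏ i, z i ^ β i)
      = ∑' γ, cauchyProduct x y γ * ∏ i, z i ^ γ i := by
  have hterm : ∀ p : (ι → ℕ) × (ι → ℕ), (x p.1 * ∏ i, z i ^ p.1 i) * (y p.2 * ∏ i, z i ^ p.2 i)
      = x p.1 * y p.2 * ∏ i, z i ^ (p.1 + p.2) i := fun p => by
    simp only [Pi.add_apply, pow_add, Finset.prod_mul_distrib]
    ring
  have hsum := summable_mul_of_summable_norm (summable_norm_mul_prod_pow hx hz)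
    (summable_norm_mul_prod_pow hy hz)
  simp only [hterm] at hsum
  rw [tsum_mul_tsum_of_summable_norm (summable_norm_mul_prod_pow hx hz)
    (summable_norm_mul_prod_pow hy hz), tsum_congr hterm]
  exact ((hasSum_fiberSum_mul (g := fun p : (ι → ℕ) × (ι → ℕ) => p.1 + p.2)
    (f := fun p => x p.1 * y p.2) (w := fun γ => ∏ i, z i ^ γ i) hsum).tsum_eq).symm

theorem apply_add_ne_zero_of_norm_eq_mul {k : ℕ} {x y h : (Fin k → ℕ) → ℂ}
    (hx : Summable (‖x ·‖)) (hy : Summable (‖y ·‖)) (hh : Summable (‖h ·‖))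
    (hmul : ∀ z : Fin k → ℂ, (∀ i, ‖z i‖ < 1) →
      ∑' γ, h γ * ∏ i, z i ^ γ i = (∑' β, x β * ∏ i, z i ^ β i) * ∑' β, y β * ∏ i, z i ^ β i)
    (hnorm : ∑' γ, ‖h γ‖ = (∑' β, ‖x β‖) * ∑' β, ‖y β‖) {β γ : Fin k → ℕ} (hβ : x β ≠ 0)
    (hγ : y γ ≠ 0) : h (β + γ) ≠ 0 := by
  have hxy : Summable fun p : (Fin k → ℕ) × (Fin k → ℕ) => ‖x p.1 * y p.2‖ := hx.mul_norm hy
  have hconv : h = cauchyProduct x y :=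
    eq_of_tsum_mul_prod_pow_eq hh (summable_norm_fiberSum hxy) fun z hz => by
      rw [hmul z hz, tsum_mul_prod_pow_mul_tsum_mul_prod_pow hx hy fun i => (hz i).le]
  have hmass : ∑' γ, ‖cauchyProduct x y γ‖
      = ∑' p : (Fin k → ℕ) × (Fin k → ℕ), ‖x p.1 * y p.2‖ := by
    simp only [← hconv, hnorm, norm_mul]
    exact tsum_mul_tsum_of_summable_norm (by simpa using hx) (by simpa using hy)
  rw [hconv]
  exact fiberSum_apply_ne_zero hxy hmass (b := (β, γ)) (mul_ne_zero hβ hγ)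

end PowerSeries

section LpOne

theorem hasSum_norm_lp_one {ι : Type*} {E : ι → Type*} [∀ i, NormedAddCommGroup (E i)]
    (x : lp E 1) : HasSum (fun i => ‖x i‖) ‖x‖ := by
  simpa using lp.hasSum_norm (p := 1) (by norm_num) x

theorem norm_lp_one_single_add_single {ι F : Type*} [DecidableEq ι] [NormedAddCommGroup F]
    {i j : ι} (hij : i ≠ j) (a b : F) :
    ‖(lp.single 1 i a + lp.single 1 j b : lp (fun _ : ι => F) 1)‖ = ‖a‖ + ‖b‖ := by
  refine (hasSum_norm_lp_one _).unique ?_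
  convert (hasSum_ite_eq i ‖a‖).add (hasSum_ite_eq j ‖b‖) using 1
  funext l
  by_cases hi : l = i <;> by_cases hj : l = j <;> simp_all

theorem eq_zero_or_eq_zero_of_norm_add_eq_of_norm_sub_eq {F : Type*} [NormedAddCommGroup F]
    [InnerProductSpace ℝ F] {u v : F}
    (hadd : ‖u + v‖ = ‖u‖ + ‖v‖) (hsub : ‖u - v‖ = ‖u‖ + ‖v‖) : u = 0 ∨ v = 0 := by
  have hpar := parallelogram_law_with_norm ℝ u v
  rw [hadd, hsub] at hpar
  have : ‖u‖ * ‖v‖ = 0 := by linarith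
  simpa using this

theorem norm_lp_one_apply_eq_of_norm_eq {ι F : Type*} [NormedAddCommGroup F]
    {x y w : lp (fun _ : ι => F) 1}
    (hle : ∀ i, ‖w i‖ ≤ ‖x i‖ + ‖y i‖) (hw : ‖w‖ = ‖x‖ + ‖y‖) (i : ι) :
    ‖w i‖ = ‖x i‖ + ‖y i‖ :=
  congrFun (eq_of_hasSum_of_le hle (hw ▸ hasSum_norm_lp_one w)
    ((hasSum_norm_lp_one x).add (hasSum_norm_lp_one y))) i

theorem lp_one_apply_eq_zero_or_eq_zero {ι F : Type*} [NormedAddCommGroup F]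
    [InnerProductSpace ℝ F] {x y : lp (fun _ : ι => F) 1}
    (hadd : ‖x + y‖ = ‖x‖ + ‖y‖) (hsub : ‖x - y‖ = ‖x‖ + ‖y‖) (i : ι) : x i = 0 ∨ y i = 0 :=
  eq_zero_or_eq_zero_of_norm_add_eq_of_norm_sub_eq
    (norm_lp_one_apply_eq_of_norm_eq (fun j => norm_add_le (x j) (y j)) hadd i)
    (norm_lp_one_apply_eq_of_norm_eq (fun j => norm_sub_le (x j) (y j)) hsub i)

end LpOne

section SupportGraph

theorem sum_smul_fst_eq_zero {σ τ : Type*} {M : AddSubmonoid ((σ → ℕ) × (τ → ℕ))}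
    (hM : Set.InjOn Prod.snd (M : Set ((σ → ℕ) × (τ → ℕ)))) {T : Type*}
    [Fintype T] {p : T → (σ → ℕ) × (τ → ℕ)} (hp : ∀ t, p t ∈ M) {c : T → ℤ}
    (hc : ∑ t, c t • (fun j => ((p t).2 j : ℤ)) = 0) :
    ∑ t, c t • (fun i => ((p t).1 i : ℤ)) = 0 := by
  obtain ⟨a, b, rfl⟩ : ∃ a b : T → ℕ, c = fun t => (a t : ℤ) - b t :=
    ⟨_, _, funext fun t => (Int.toNat_sub_toNat_neg (c t)).symm⟩
  have hmem : ∀ n : T → ℕ, ∑ t, n t • p t ∈ M := fun n =>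
    M.sum_mem fun t _ => M.nsmul_mem (hp t) (n t)
  have hsnd : (∑ t, a t • p t).2 = (∑ t, b t • p t).2 := by
    funext j
    have hj := congrFun hc j
    simp only [Finset.sum_apply, Pi.smul_apply, smul_eq_mul, Pi.zero_apply, sub_mul,
      Finset.sum_sub_distrib] at hj
    simp only [Prod.snd_sum, Prod.smul_snd, Finset.sum_apply, Pi.smul_apply, smul_eq_mul]
    zify
    linarith
  have hfst := congrFun (congrArg Prod.fst (hM (hmem a) (hmem b) hsnd))
  funext i
  have hi := hfst i
  simp only [Prod.fst_sum, Prod.smul_fst, Finset.sum_apply, Pi.smul_apply, smul_eq_mul] at hi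
  zify at hi
  simp only [Finset.sum_apply, Pi.smul_apply, smul_eq_mul, Pi.zero_apply, sub_mul,
    Finset.sum_sub_distrib]
  linarith

theorem det_ne_zero_of_forall_single_mem {ι : Type*} [Fintype ι] [DecidableEq ι]
    {M : AddSubmonoid ((ι → ℕ) × (ι → ℕ))} (hM : Set.InjOn Prod.snd (M : Set ((ι → ℕ) × (ι → ℕ))))
    {A : ι → ι → ℕ} (hA : ∀ i, (Pi.single i 1, A i) ∈ M) :
    Matrix.det (Matrix.of fun i j => (A i j : ℤ)) ≠ 0 := by
  intro hdet
  obtain ⟨v, hv0, hv⟩ := Matrix.exists_vecMul_eq_zero_iff.mpr hdet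
  rw [Matrix.vecMul_eq_sum] at hv
  have hrel := sum_smul_fst_eq_zero hM (p := fun i => (Pi.single i 1, A i)) hA hv
  refine hv0 (funext fun j => ?_)
  simpa [Finset.sum_apply, Pi.single_apply] using congrFun hrel j

theorem eq_of_single_mem_of_single_mem {ι : Type*} [Fintype ι] [DecidableEq ι]
    {M : AddSubmonoid ((ι → ℕ) × (ι → ℕ))} (hM : Set.InjOn Prod.snd (M : Set ((ι → ℕ) × (ι → ℕ))))
    {A : ι → ι → ℕ} (hA : ∀ i, (Pi.single i 1, A i) ∈ M) {i : ι} {β γ : ι → ℕ}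
    (hβ : (Pi.single i 1, β) ∈ M) (hγ : (Pi.single i 1, γ) ∈ M) : β = γ := by
  set s := Function.update A i β
  have hs : ∀ j, (Pi.single j 1, s j) ∈ M := fun j => by
    by_cases hj : j = i
    · subst hj; simpa [s] using hβ
    · simpa [s, hj] using hA j
  set p : Option ι → (ι → ℕ) × (ι → ℕ) := fun o =>
    o.elim (Pi.single i 1, γ) fun j => (Pi.single j 1, s j)
  have hp : ∀ o, p o ∈ M := fun o => o.rec hγ hs
  -- `card ι + 1` vectors in `ℤ^ι` are linearly dependent
  have hdep : ¬ LinearIndependent ℤ fun o j => ((p o).2 j : ℤ) := fun h => by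
    simpa using h.fintype_card_le_finrank
  obtain ⟨c, hc, o, ho⟩ := Fintype.not_linearIndependent_iff.mp hdep
  have hfst := sum_smul_fst_eq_zero hM hp hc
  rw [Fintype.sum_option] at hc hfst
  have hcoef : ∀ j, c (some j) = if j = i then -c none else 0 := fun j => by
    have := congrFun hfst j
    simp [p, Finset.sum_apply, Pi.single_apply] at this
    split_ifs at this ⊢ <;> omega
  have hnone : c none ≠ 0 := fun h0 => ho (by cases o <;> simp [hcoef, h0])
  funext j
  have := congrFun hc j
  simp [p, s, hcoef] at this
  exact_mod_cast mul_left_cancel₀ hnone (by linarith : c none * β j = c none * γ j)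

end SupportGraph

section Monomials

theorem vecMul_injective_of_det_ne_zero {ι : Type*} [Fintype ι] [DecidableEq ι]
    {A : ι → ι → ℕ} (hdet : Matrix.det (Matrix.of fun i j => (A i j : ℤ)) ≠ 0) :
    Function.Injective fun α : ι → ℕ => Matrix.vecMul α (Matrix.of A) := by
  intro α α' h
  by_contra hne
  refine hdet (Matrix.exists_vecMul_eq_zero_iff.mp ⟨fun i => α i - α' i, fun h0 => hne ?_, ?_⟩)
  · funext i
    simpa [sub_eq_zero] using congrFun h0 i
  · funext j
    have hj := congrFun h j
    simp only [Matrix.vecMul, dotProduct, Matrix.of_apply] at hj ⊢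
    zify at hj
    simp [sub_mul, Finset.sum_sub_distrib, hj]

theorem prod_mul_prod_pow_pow {ι : Type*} [Fintype ι] (ε z : ι → ℂ) (A : ι → ι → ℕ)
    (α : ι → ℕ) :
    ∏ i, (ε i * ∏ j, z j ^ A i j) ^ α i
      = (∏ i, ε i ^ α i) * ∏ j, z j ^ Matrix.vecMul α (Matrix.of A) j := by
  simp only [mul_pow, Finset.prod_mul_distrib, ← Finset.prod_pow, ← pow_mul, Matrix.vecMul,
    dotProduct, Matrix.of_apply, ← Finset.prod_pow_eq_pow_sum]
  rw [Finset.prod_comm]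
  simp only [mul_comm]

end Monomials

section Isometry

variable {k : ℕ} {φ : (Fin k → ℂ) → (Fin k → ℂ)} {T : Coeffk k →L[ℂ] Coeffk k}

def IsCompositionOperator (T : Coeffk k →L[ℂ] Coeffk k) (φ : (Fin k → ℂ) → (Fin k → ℂ)) :
    Prop :=
  ∀ (a : Coeffk k) (z : Fin k → ℂ), (∀ i, ‖z i‖ < 1) →
    ∑' α : Fin k → ℕ, (T a) α * ∏ i, z i ^ α i = ∑' α : Fin k → ℕ, a α * ∏ i, (φ z i) ^ α i

def monomialImage (T : Coeffk k →L[ℂ] Coeffk k) (α : Fin k → ℕ) : (Fin k → ℕ) → ℂ :=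
  T (lp.single 1 α 1)

theorem hasSum_norm_monomialImage (hiso : ∀ a, ‖T a‖ = ‖a‖) (α : Fin k → ℕ) :
    HasSum (fun β => ‖monomialImage T α β‖) 1 := by
  simpa [monomialImage, hiso, lp.norm_single] using hasSum_norm_lp_one (T (lp.single 1 α 1))

theorem tsum_monomialImage_mul_prod_pow (hT : IsCompositionOperator T φ) (α : Fin k → ℕ)
    {z : Fin k → ℂ} (hz : ∀ i, ‖z i‖ < 1) :
    ∑' β, monomialImage T α β * ∏ i, z i ^ β i = ∏ i, φ z i ^ α i := by
  rw [monomialImage, hT _ z hz, tsum_eq_single α fun β hβ => by simp [hβ]]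
  simp

theorem monomialImage_eq_zero_or_eq_zero (hiso : ∀ a, ‖T a‖ = ‖a‖) {α α' : Fin k → ℕ}
    (hα : α ≠ α') (β : Fin k → ℕ) : monomialImage T α β = 0 ∨ monomialImage T α' β = 0 := by
  have hnorm : ∀ b : ℂ, ‖b‖ = 1 →
      ‖T (lp.single 1 α 1) + T (lp.single 1 α' b)‖
        = ‖T (lp.single 1 α 1)‖ + ‖T (lp.single 1 α' b)‖ := fun b hb => by
    rw [← map_add, hiso, hiso, hiso, norm_lp_one_single_add_single hα, lp.norm_single,
      lp.norm_single] <;> simp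
  have hsub := hnorm (-1) (by simp)
  rw [lp.single_neg, map_neg, ← sub_eq_add_neg, norm_neg] at hsub
  exact lp_one_apply_eq_zero_or_eq_zero (hnorm 1 (by simp)) hsub β

theorem monomialImage_add_ne_zero (hT : IsCompositionOperator T φ) (hiso : ∀ a, ‖T a‖ = ‖a‖)
    {α α' β γ : Fin k → ℕ} (hβ : monomialImage T α β ≠ 0) (hγ : monomialImage T α' γ ≠ 0) :
    monomialImage T (α + α') (β + γ) ≠ 0 := by
  have hsum : ∀ α, Summable fun β => ‖monomialImage T α β‖ := fun α =>
    (hasSum_norm_monomialImage hiso α).summable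
  refine apply_add_ne_zero_of_norm_eq_mul (hsum α) (hsum α') (hsum _) (fun z hz => ?_) ?_ hβ hγ
  · simp only [tsum_monomialImage_mul_prod_pow hT _ hz, Pi.add_apply, pow_add,
      Finset.prod_mul_distrib]
  · simp only [(hasSum_norm_monomialImage hiso _).tsum_eq, mul_one]

theorem monomialImage_zero (hT : IsCompositionOperator T φ) :
    monomialImage T 0 = Pi.single 0 1 := by
  refine eq_of_tsum_mul_prod_pow_eq (hasSum_norm_lp_one _).summable
    (summable_of_ne_finset_zero (s := {0}) fun β hβ => by simp_all) fun z hz => ?_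
  rw [tsum_monomialImage_mul_prod_pow hT 0 hz, tsum_eq_single 0 fun β hβ => by simp [hβ]]
  simp

def monomialSupport (hT : IsCompositionOperator T φ) (hiso : ∀ a, ‖T a‖ = ‖a‖) :
    AddSubmonoid ((Fin k → ℕ) × (Fin k → ℕ)) where
  carrier := {p | monomialImage T p.1 p.2 ≠ 0}
  add_mem' := monomialImage_add_ne_zero hT hiso
  zero_mem' := by simp [monomialImage_zero hT]

theorem mem_monomialSupport {hT : IsCompositionOperator T φ} {hiso : ∀ a, ‖T a‖ = ‖a‖}
    {p : (Fin k → ℕ) × (Fin k → ℕ)} :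
    p ∈ monomialSupport hT hiso ↔ monomialImage T p.1 p.2 ≠ 0 :=
  Iff.rfl

theorem exists_monomial_of_isometry (hT : IsCompositionOperator T φ)
    (hiso : ∀ a, ‖T a‖ = ‖a‖) :
    ∃ A : Fin k → Fin k → ℕ, Matrix.det (Matrix.of fun i j => (A i j : ℤ)) ≠ 0 ∧
      ∃ ε : Fin k → ℂ, (∀ i, ‖ε i‖ = 1) ∧
        ∀ z : Fin k → ℂ, (∀ i, ‖z i‖ < 1) → ∀ i, φ z i = ε i * ∏ j, z j ^ A i j := by
  have hgraph : Set.InjOn Prod.snd (monomialSupport hT hiso : Set ((Fin k → ℕ) × (Fin k → ℕ))) :=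
    fun p hp q hq hpq => by
      rw [SetLike.mem_coe, mem_monomialSupport] at hp hq
      refine Prod.ext ?_ hpq
      by_contra hne
      exact (monomialImage_eq_zero_or_eq_zero hiso hne p.2).elim hp (hpq ▸ hq)
  have hsupport : ∀ i, ∃ β, monomialImage T (Pi.single i 1) β ≠ 0 := fun i => by
    by_contra! h0
    have h1 := hasSum_norm_monomialImage hiso (Pi.single i 1)
    simp only [h0, norm_zero] at h1
    exact one_ne_zero (h1.unique hasSum_zero)
  choose A hA using hsupport
  have hA' : ∀ i, (Pi.single i 1, A i) ∈ monomialSupport hT hiso := fun i =>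
    mem_monomialSupport.mpr (hA i)
  have huniq : ∀ i β, β ≠ A i → monomialImage T (Pi.single i 1) β = 0 := fun i β hβ => by
    by_contra h
    exact hβ (eq_of_single_mem_of_single_mem hgraph hA' (mem_monomialSupport.mpr h) (hA' i))
  refine ⟨A, det_ne_zero_of_forall_single_mem hgraph hA',
    fun i => monomialImage T (Pi.single i 1) (A i), fun i => ?_, fun z hz i => ?_⟩
  · exact ((hasSum_norm_monomialImage hiso _).unique
      (hasSum_single (A i) fun β hβ => by simp [huniq i β hβ])).symm
  · have hφ := tsum_monomialImage_mul_prod_pow hT (Pi.single i 1) hz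
    rw [tsum_eq_single (A i) fun β hβ => by simp [huniq i β hβ]] at hφ
    simpa [Pi.single_apply] using hφ.symm

theorem isometry_of_monomial (hT : IsCompositionOperator T φ) {A : Fin k → Fin k → ℕ}
    (hdet : Matrix.det (Matrix.of fun i j => (A i j : ℤ)) ≠ 0) {ε : Fin k → ℂ}
    (hε : ∀ i, ‖ε i‖ = 1)
    (hφ : ∀ z : Fin k → ℂ, (∀ i, ‖z i‖ < 1) → ∀ i, φ z i = ε i * ∏ j, z j ^ A i j)
    (a : Coeffk k) : ‖T a‖ = ‖a‖ := by
  set σ := fun α : Fin k → ℕ => Matrix.vecMul α (Matrix.of A)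
  set F : (Fin k → ℕ) → ℂ := fun α => a α * ∏ i, ε i ^ α i
  have hF : ∀ α, ‖F α‖ = ‖a α‖ := fun α => by simp [F, hε]
  have hFsum : HasSum (‖F ·‖) ‖a‖ := by simpa only [hF] using hasSum_norm_lp_one a
  have hcoeff : ⇑(T a) = fiberSum σ F := by
    refine eq_of_tsum_mul_prod_pow_eq (hasSum_norm_lp_one _).summable
      (summable_norm_fiberSum hFsum.summable) fun z hz => ?_
    have hsum : Summable fun α => F α * ∏ i, z i ^ σ α i :=
      hFsum.summable.of_norm_bounded fun α => norm_mul_prod_pow_le (fun i => (hz i).le) _ _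
    rw [hT a z hz, (hasSum_fiberSum_mul (g := σ) (f := F) (w := fun β => ∏ i, z i ^ β i)
      hsum).tsum_eq]
    refine tsum_congr fun α => ?_
    rw [Finset.prod_congr rfl fun i _ => by rw [hφ z hz i], prod_mul_prod_pow_pow, mul_assoc]
  have hσ : σ.Injective := vecMul_injective_of_det_ne_zero hdet
  refine (hasSum_norm_lp_one (T a)).unique ?_
  rw [hcoeff, funext (norm_fiberSum_of_injective (f := F) hσ)]
  exact hasSum_fiberSum hFsum σ

end Isometry

end WienerAlgebra

theorem statement_13_general (k : ℕ) (φ : (Fin k → ℂ) → (Fin k → ℂ))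
    (T : Coeffk k →L[ℂ] Coeffk k)
    (hT : ∀ (a : Coeffk k) (z : Fin k → ℂ), (∀ i, ‖z i‖ < 1) →
      ∑' α : Fin k → ℕ, (T a) α * ∏ i, z i ^ α i
        = ∑' α : Fin k → ℕ, a α * ∏ i, (φ z i) ^ α i) :
    (∀ a : Coeffk k, ‖T a‖ = ‖a‖) ↔
      ∃ A : Fin k → Fin k → ℕ,
        Matrix.det (Matrix.of fun i j => (A i j : ℤ)) ≠ 0 ∧
        ∃ ε : Fin k → ℂ, (∀ i, ‖ε i‖ = 1) ∧
          ∀ z : Fin k → ℂ, (∀ i, ‖z i‖ < 1) →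
            ∀ i, φ z i = ε i * ∏ j, z j ^ A i j :=
  ⟨WienerAlgebra.exists_monomial_of_isometry hT,
    fun ⟨_, hdet, _, hε, hφ⟩ => WienerAlgebra.isometry_of_monomial hT hdet hε hφ⟩

/-- Theorem 4.1.  Let `φ = (φ₁,…,φ_k) : 𝔻^k → 𝔻̄^k` be analytic,
inducing a composition operator `C_φ` on `A⁺(𝕋^k)` (`T` is `C_φ` on coefficient
families).  Then `C_φ` is an isometry iff there are a `k×k` matrix `A = (a_{ij})` of
non-negative integers with `det A ≠ 0` and unimodular `ε₁,…,ε_k` such that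
`φ_i(z) = ε_i z₁^{a_{i1}} ⋯ z_k^{a_{ik}}` on `𝔻^k`. -/
theorem statement_13 (k : ℕ) (hk : 0 < k) (φ : (Fin k → ℂ) → (Fin k → ℂ))
    (hanal : DifferentiableOn ℂ φ {z : Fin k → ℂ | ∀ i, ‖z i‖ < 1})
    (hmaps : ∀ z : Fin k → ℂ, (∀ i, ‖z i‖ < 1) →
      ∀ i, ‖φ z i‖ ≤ 1)
    (T : Coeffk k →L[ℂ] Coeffk k)
    (hT : ∀ (a : Coeffk k) (z : Fin k → ℂ), (∀ i, ‖z i‖ < 1) →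
      ∑' α : Fin k → ℕ, (T a) α * ∏ i, z i ^ α i
        = ∑' α : Fin k → ℕ, a α * ∏ i, (φ z i) ^ α i) :
    (∀ a : Coeffk k, ‖T a‖ = ‖a‖) ↔
      ∃ A : Fin k → Fin k → ℕ,
        Matrix.det (Matrix.of fun i j => (A i j : ℤ)) ≠ 0 ∧
        ∃ ε : Fin k → ℂ, (∀ i, ‖ε i‖ = 1) ∧
          ∀ z : Fin k → ℂ, (∀ i, ‖z i‖ < 1) →
            ∀ i, φ z i = ε i * ∏ j, z j ^ A i j :=
  statement_13_general k φ T hT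
end
end

section
/- Let φ = (φ₁,…,φ_k), where each φ_i ∈ A⁺(𝕋^k) is of the form φ_i = ε_i F_i with ε_i a complex number of modulus 1 and F_i having all coefficients nonnegative (so that no cancellation of coefficients occurs in products). If at least one φ_i is not a monomial (i.e. its spectrum Sp φ_i contains at least two multi-indices), then there exist distinct multi-indices α, α' ∈ ℕ₀^k such that the spectra of φ^α and φ^{α'} intersect, where φ^α := ∏_{i=1}^k φ_i^{α_i}. -/
open Complex

noncomputable section

/-- Membership in the spectrum of the product `φ^α = ∏ i, φ_i^{α_i}`, where `φ_i` has
coefficient family `p i` with no cancellation in products (coefficients unimodular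
multiples of non-negative reals): `β` is in the spectrum of `φ^α` iff it is a sum of
`α i` spectrum elements of `φ_i` over all `i`. -/
def MemSpecPow {k : ℕ} (p : Fin k → (Fin k → ℕ) → ℂ) (α β : Fin k → ℕ) : Prop :=
  ∃ c : (i : Fin k) → Fin (α i) → (Fin k → ℕ),
    (∀ i t, p i (c i t) ≠ 0) ∧ β = ∑ i, ∑ t, c i t

/-!
Choose a spectrum point `γ i` of every `φ_i`, with `γ i₀ = β₀`, and a second spectrum point
`β₁ ≠ β₀` of `φ_{i₀}`. These `k + 1` vectors of `ℤ^k` satisfy a nontrivial integer relation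
`∑ g_j v_j = 0`. Since the spectra satisfy `Sp φ^α + Sp φ^α' ⊆ Sp φ^(α + α')`, the common value
`β = ∑ g_j⁺ v_j = ∑ g_j⁻ v_j` lies in `Sp φ^α ∩ Sp φ^α'`, where `α` and `α'` count, for each `i`,
how many points of `Sp φ_i` enter the two sums. If `α = α'`, the relation is supported on the two
points of `Sp φ_{i₀}` with opposite coefficients, so it reads `g (β₁ - β₀) = 0`, forcing `g = 0`.
-/
section SpecPow

variable {k : ℕ} {p : Fin k → (Fin k → ℕ) → ℂ}

theorem memSpecPow_zero : MemSpecPow p 0 0 :=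
  ⟨fun _ t => t.elim0, fun _ t => t.elim0, by simp⟩

theorem MemSpecPow.add {α α' β β' : Fin k → ℕ} (h : MemSpecPow p α β)
    (h' : MemSpecPow p α' β') : MemSpecPow p (α + α') (β + β') := by
  obtain ⟨c, hc, rfl⟩ := h
  obtain ⟨c', hc', rfl⟩ := h'
  refine ⟨fun i => Fin.append (c i) (c' i), fun i t => ?_, ?_⟩
  · exact Fin.addCases (fun t => by simpa using hc i t) (fun t => by simpa using hc' i t) t
  · simp [Fin.sum_univ_add, Finset.sum_add_distrib]

theorem memSpecPow_single {i : Fin k} {γ : Fin k → ℕ} (h : p i γ ≠ 0) :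
    MemSpecPow p (Pi.single i 1) γ := by
  refine ⟨fun _ _ => γ, fun j t => ?_, ?_⟩
  · obtain rfl : j = i := by
      by_contra hj
      exact absurd t.2 (by simp [hj])
    exact h
  · simp [Pi.single_apply]

variable (p) in
def specPowAddSubmonoid : AddSubmonoid ((Fin k → ℕ) × (Fin k → ℕ)) where
  carrier := {x | MemSpecPow p x.1 x.2}
  zero_mem' := memSpecPow_zero
  add_mem' := MemSpecPow.add

@[simp]
theorem mem_specPowAddSubmonoid {x : (Fin k → ℕ) × (Fin k → ℕ)} :
    x ∈ specPowAddSubmonoid p ↔ MemSpecPow p x.1 x.2 :=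
  Iff.rfl

theorem memSpecPow_sum_nsmul {J : Type*} [Fintype J] {ι : J → Fin k} {b : J → Fin k → ℕ}
    (hb : ∀ j, p (ι j) (b j) ≠ 0) (z : J → ℕ) :
    MemSpecPow p (∑ j, z j • Pi.single (ι j) 1) (∑ j, z j • b j) := by
  have := (specPowAddSubmonoid p).sum_mem (t := Finset.univ) fun j _ =>
    (specPowAddSubmonoid p).nsmul_mem (x := (Pi.single (ι j) 1, b j))
      (memSpecPow_single (hb j)) (z j)
  simpa only [mem_specPowAddSubmonoid, Prod.fst_sum, Prod.snd_sum, Prod.smul_fst, Prod.smul_snd]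
    using this

end SpecPow

theorem sum_toNat_smul_eq_iff {J ι : Type*} [Fintype J] (g : J → ℤ) (a : J → ι → ℕ) :
    ∑ j, (g j).toNat • a j = ∑ j, (-g j).toNat • a j ↔
      ∑ j, g j • (fun i => (a j i : ℤ)) = 0 := by
  have hinj : Function.Injective fun (x : ι → ℕ) (i : ι) => (x i : ℤ) :=
    fun x y h => funext fun i => by simpa using congrFun h i
  rw [← hinj.eq_iff, ← sub_eq_zero]
  congr!
  ext i
  simp only [Finset.sum_apply, Pi.smul_apply, Pi.sub_apply, smul_eq_mul, Nat.cast_sum,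
    Nat.cast_mul, ← Finset.sum_sub_distrib, ← sub_mul, Int.toNat_sub_toNat_neg]

theorem eq_zero_of_sum_smul_single_eq_zero {M : Type*} [AddCommGroup M]
    [Module.IsTorsionFree ℤ M] {k : ℕ} {i₀ : Fin k} {b : Option (Fin k) → M}
    (hb : b none ≠ b (some i₀))
    {g : Option (Fin k) → ℤ} (hsingle : ∑ j, g j • (Pi.single (j.getD i₀) 1 : Fin k → ℤ) = 0)
    (hsum : ∑ j, g j • b j = 0) : g = 0 := by
  have hsome : ∀ i, g (some i) = -(Pi.single i₀ (g none) : Fin k → ℤ) i := by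
    intro i
    rw [eq_neg_iff_add_eq_zero, add_comm, Pi.single_apply]
    simpa [Fintype.sum_option, Pi.single_apply] using congrFun hsingle i
  have hnone : g none = 0 := by
    simp only [Fintype.sum_option, hsome, Pi.single_apply, neg_smul, ite_smul, zero_smul,
      Finset.sum_neg_distrib, Finset.sum_ite_eq', Finset.mem_univ, if_true] at hsum
    rw [← sub_eq_add_neg, ← smul_sub, smul_eq_zero] at hsum
    exact hsum.resolve_right (sub_ne_zero.mpr hb)
  funext j
  cases j with
  | none => exact hnone
  | some i => simp [hsome, hnone]

theorem statement_15_general (k : ℕ) (p : Fin k → (Fin k → ℕ) → ℂ)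
    (hne : ∀ i, ∃ β, p i β ≠ 0)
    (hnotmono : ∃ i, ∃ β β' : Fin k → ℕ, β ≠ β' ∧ p i β ≠ 0 ∧ p i β' ≠ 0) :
    ∃ α α' : Fin k → ℕ, α ≠ α' ∧
      ∃ β : Fin k → ℕ, MemSpecPow p α β ∧ MemSpecPow p α' β := by
  obtain ⟨i₀, β₀, β₁, hβ, hβ₀, hβ₁⟩ := hnotmono
  choose γ hγ using hne
  set b : Option (Fin k) → Fin k → ℕ := fun j => j.elim β₁ (Function.update γ i₀ β₀)
  have hb : ∀ j, p (j.getD i₀) (b j) ≠ 0 := by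
    rintro (_ | i)
    · exact hβ₁
    · rcases eq_or_ne i i₀ with rfl | hi
      · simpa [b] using hβ₀
      · simpa [b, hi] using hγ i
  obtain ⟨g, hgb, j₀, hgj₀⟩ : ∃ g : Option (Fin k) → ℤ,
      ∑ j, g j • (fun i => (b j i : ℤ)) = 0 ∧ ∃ j, g j ≠ 0 :=
    Fintype.not_linearIndependent_iff.mp fun h => by simpa using h.fintype_card_le_finrank
  refine ⟨∑ j, (g j).toNat • Pi.single (j.getD i₀) 1, ∑ j, (-g j).toNat • Pi.single (j.getD i₀) 1,
    fun hα => hgj₀ ?_, ∑ j, (g j).toNat • b j, memSpecPow_sum_nsmul hb _, ?_⟩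
  · have hcast : (fun i => (b none i : ℤ)) ≠ fun i => (b (some i₀) i : ℤ) :=
      fun h => hβ (funext fun i => by simpa [b] using (congrFun h i).symm)
    rw [sum_toNat_smul_eq_iff] at hα
    refine congrFun (eq_zero_of_sum_smul_single_eq_zero hcast ?_ hgb) j₀
    convert hα using 3 with j
    ext i
    simp [Pi.single_apply]
  · rw [(sum_toNat_smul_eq_iff g b).mpr hgb]
    exact memSpecPow_sum_nsmul hb _

/-- Lemma 4.3.  Let `φ = (φ₁,…,φ_k)` with each `φ_i ∈ A⁺(𝕋^k)`
(coefficient family `p i`, absolutely summable) of the form `φ_i = ε_i F_i`, where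
`|ε_i| = 1` and `F_i` has non-negative coefficients (so no cancellation of coefficients
occurs in products), and each `φ_i ≠ 0`.  If some `φ_i` is not a monomial (its spectrum
contains two distinct multi-indices), then there are distinct multi-indices `α ≠ α'`
such that the spectra of `φ^α` and `φ^{α'}` intersect. -/
theorem statement_15 (k : ℕ) (p : Fin k → (Fin k → ℕ) → ℂ) (ε : Fin k → ℂ)
    (hsum : ∀ i, Summable fun β : Fin k → ℕ => ‖p i β‖)
    (hε : ∀ i, ‖ε i‖ = 1)
    (hnonneg : ∀ i β, ∃ r : ℝ, 0 ≤ r ∧ p i β = ε i * (r : ℂ))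
    (hne : ∀ i, ∃ β, p i β ≠ 0)
    (hnotmono : ∃ i, ∃ β β' : Fin k → ℕ, β ≠ β' ∧ p i β ≠ 0 ∧ p i β' ≠ 0) :
    ∃ α α' : Fin k → ℕ, α ≠ α' ∧
      ∃ β : Fin k → ℕ, MemSpecPow p α β ∧ MemSpecPow p α' β :=
  statement_15_general k p hne hnotmono
end
end
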